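/- arXiv:0710.0635 — 11 statements merged into one kernel-verified Lean document; each statement's English description precedes it below -/
import Mathlib

section
/- Let w_1, …, w_m be linear forms in B and let d_1, …, d_m be natural numbers. Then for every nonzero linear form w lying in the 𝔽_p-span of {w_1, …, w_m}, the element w divides det M(w_1,…,w_m; d_1,…,d_m) in B. -/
open MvPolynomial

/-- The linear form `Σ_i v_i X_i` in `B = (ZMod p)[X_1, …, X_m]` associated to a
coefficient vector `v : Fin m → ZMod p`. -/
noncomputable def linForm (p m : ℕ) (v : Fin m → ZMod p) :
    MvPolynomial (Fin m) (ZMod p) :=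
  ∑ i : Fin m, MvPolynomial.C (v i) * MvPolynomial.X i

/-- every nonzero linear form `w` in the `𝔽_p`-span of `w_1, …, w_m`
divides `det M(w_1,…,w_m; d_1,…,d_m)`. -/
theorem stmt0 (p m : ℕ) [Fact p.Prime] (hm : 1 ≤ m)
    (v : Fin m → Fin m → ZMod p) (d : Fin m → ℕ)
    (w : MvPolynomial (Fin m) (ZMod p))
    (hw : w ∈ Submodule.span (ZMod p) (Set.range fun j => linForm p m (v j)))
    (hw0 : w ≠ 0) :
    w ∣ Matrix.det (Matrix.of fun i j : Fin m => (linForm p m (v j)) ^ p ^ d i) := by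
  obtain ⟨c, hc⟩ := Submodule.mem_span_range_iff_exists_fun (ZMod p) |>.mp hw
  obtain ⟨j0, hj0⟩ : ∃ j0, c j0 ≠ 0 := by
    by_contra h
    push_neg at h
    apply hw0
    rw [← hc]
    simp [h]
  set A : Matrix (Fin m) (Fin m) (MvPolynomial (Fin m) (ZMod p)) :=
    Matrix.of fun i j : Fin m => (linForm p m (v j)) ^ p ^ d i with hA
  have hchar : CharP (MvPolynomial (Fin m) (ZMod p)) p := inferInstance
  have hexp : ExpChar (MvPolynomial (Fin m) (ZMod p)) p :=
    ExpChar.prime (Fact.out : p.Prime)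
  -- w ^ p ^ e is the corresponding combination of the w_j ^ p ^ e
  have hcol : ∀ k : Fin m, w ^ p ^ d k = ∑ i, (MvPolynomial.C (c i) : MvPolynomial (Fin m) (ZMod p)) • A k i := by
    intro k
    rw [← hc, sum_pow_char_pow]
    refine Finset.sum_congr rfl fun i _ => ?_
    rw [smul_pow, MvPolynomial.smul_eq_C_mul, smul_eq_mul]
    congr 1
    rw [ZMod.pow_card_pow]
  have key : (A.updateCol j0 fun k => w ^ p ^ d k).det
      = (MvPolynomial.C (c j0) : MvPolynomial (Fin m) (ZMod p)) • A.det := by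
    rw [show (fun k => w ^ p ^ d k)
        = fun k => ∑ i, (fun i => (MvPolynomial.C (c i) : MvPolynomial (Fin m) (ZMod p))) i • A k i from funext hcol]
    exact Matrix.det_updateCol_sum A j0 _
  have hdvd : w ∣ (A.updateCol j0 fun k => w ^ p ^ d k).det := by
    have : (fun k => w ^ p ^ d k) = w • fun k => w ^ (p ^ d k - 1) := by
      funext k
      have hne : p ^ d k ≠ 0 := pow_ne_zero _ (Fact.out : p.Prime).ne_zero
      simp only [Pi.smul_apply, smul_eq_mul]
      rw [← pow_succ']
      congr 1
      omega
    rw [this, Matrix.det_updateCol_smul]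
    exact Dvd.intro _ rfl
  rw [key] at hdvd
  have hu : IsUnit (MvPolynomial.C (c j0) : MvPolynomial (Fin m) (ZMod p)) :=
    (isUnit_iff_ne_zero.mpr hj0).map MvPolynomial.C
  rw [smul_eq_mul] at hdvd
  exact hu.dvd_mul_left.mp hdvd
end

section
/- Let w_1, …, w_m be linearly independent linear forms in B with 𝔽_p-span W, let d_1, …, d_m be natural numbers, and let S be a system of line representatives for W. Then the product Δ(W) = ∏_{w∈S} w divides det M(w_1,…,w_m; d_1,…,d_m) in B. -/
open MvPolynomial

/-- A system of line representatives for a subspace `W` of an `𝔽_p`-module: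
a finite set of nonzero elements of `W` such that every nonzero element of `W`
is a scalar multiple of exactly one element of the set. -/
def IsLineReps {p : ℕ} {M : Type*} [AddCommGroup M] [Module (ZMod p) M]
    (W : Submodule (ZMod p) M) (S : Finset M) : Prop :=
  (∀ w ∈ S, w ∈ W ∧ w ≠ 0) ∧
    ∀ w ∈ W, w ≠ 0 → ∃! u, u ∈ S ∧ ∃ c : ZMod p, w = c • u

/-!
Each `w ∈ S` is a nonzero element of the column span, so a column operation turns column `j`
(with nonzero coefficient `c_j` of `w`) into `(w ^ p ^ d_i)_i`, as `x ↦ x ^ p ^ k` is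
`𝔽_p`-linear; hence `w` divides `c_j • det M`. The elements of `S` are nonzero linear forms,
hence irreducible, and two of them are never associated since associated polynomials differ by a
nonzero constant. So the elements of `S` are pairwise relatively prime and their product divides
`det M`.
-/

theorem IsLineReps.eq_of_eq_smul {p : ℕ} {M : Type*} [AddCommGroup M] [Module (ZMod p) M]
    {W : Submodule (ZMod p) M} {S : Finset M} (hS : IsLineReps W S) {a b : M}
    (ha : a ∈ S) (hb : b ∈ S) {c : ZMod p} (hab : b = c • a) : a = b := by
  obtain ⟨hbW, hb0⟩ := hS.1 b hb
  exact (hS.2 b hbW hb0).unique ⟨ha, c, hab⟩ ⟨hb, 1, (one_smul _ _).symm⟩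

theorem isHomogeneous_linForm (p m : ℕ) (v : Fin m → ZMod p) :
    (linForm p m v).IsHomogeneous 1 :=
  IsHomogeneous.sum _ _ _ fun i _ => isHomogeneous_C_mul_X (v i) i

namespace MvPolynomial

variable {σ K : Type*} [Field K]

theorem irreducible_of_isHomogeneous_one {f : MvPolynomial σ K} (hf : f.IsHomogeneous 1)
    (hf0 : f ≠ 0) : Irreducible f := by
  refine irreducible_of_totalDegree_eq_one (hf.totalDegree hf0) fun x hx => ?_
  obtain ⟨n, hn⟩ := ne_zero_iff.mp hf0
  exact isUnit_iff_ne_zero.mpr fun hx0 => hn (zero_dvd_iff.mp (hx0 ▸ hx n))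

theorem exists_eq_smul_of_associated {f g : MvPolynomial σ K} (h : Associated f g) :
    ∃ c : K, g = c • f := by
  obtain ⟨u, rfl⟩ := h
  obtain ⟨c, -, hc⟩ := isUnit_iff_eq_C_of_isReduced.mp u.isUnit
  exact ⟨c, by rw [hc, smul_eq_C_mul, mul_comm]⟩

end MvPolynomial

section Frobenius

variable {p : ℕ} [Fact p.Prime] {R : Type*} [CommRing R] [Algebra (ZMod p) R] [CharP R p]
  {ι : Type*}

theorem sum_smul_pow_char_pow (s : Finset ι) (c : ι → ZMod p) (f : ι → R) (k : ℕ) :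
    (∑ j ∈ s, c j • f j) ^ p ^ k = ∑ j ∈ s, c j • f j ^ p ^ k := by
  simp only [sum_pow_char_pow, smul_pow, ZMod.pow_card_pow]

theorem dvd_det_of_mem_span [Fintype ι] [DecidableEq ι] (f : ι → R) (d : ι → ℕ) {w : R}
    (hw : w ∈ Submodule.span (ZMod p) (Set.range f)) (hw0 : w ≠ 0) :
    w ∣ (Matrix.of fun i j => f j ^ p ^ d i).det := by
  set A := Matrix.of fun i j => f j ^ p ^ d i
  obtain ⟨c, hc⟩ := (Submodule.mem_span_range_iff_exists_fun _).mp hw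
  obtain ⟨j, hj⟩ : ∃ j, c j ≠ 0 := by
    by_contra! h
    exact hw0 (by simp [← hc, h])
  have hcol : (fun i => ∑ k, algebraMap (ZMod p) R (c k) • A i k) = fun i => w ^ p ^ d i := by
    simp only [algebraMap_smul, ← hc, sum_smul_pow_char_pow, A, Matrix.of_apply]
  choose g hg using fun i => dvd_pow_self w (pow_ne_zero (d i) (Fact.out : p.Prime).ne_zero)
  have hdet := Matrix.det_updateCol_sum A j fun k => algebraMap (ZMod p) R (c k)
  rw [hcol, show (fun i => w ^ p ^ d i) = w • g from funext hg, Matrix.det_updateCol_smul,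
    smul_eq_mul] at hdet
  exact ((hj.isUnit.map (algebraMap (ZMod p) R)).dvd_mul_left).mp ⟨_, hdet.symm⟩

end Frobenius

theorem stmt1_general (p m : ℕ) [Fact p.Prime]
    (v : Fin m → Fin m → ZMod p)
    (d : Fin m → ℕ)
    (S : Finset (MvPolynomial (Fin m) (ZMod p)))
    (hS : IsLineReps (Submodule.span (ZMod p) (Set.range fun j => linForm p m (v j))) S) :
    (∏ w ∈ S, w) ∣
      Matrix.det (Matrix.of fun i j : Fin m => (linForm p m (v j)) ^ p ^ d i) := by
  have hW : Submodule.span (ZMod p) (Set.range fun j => linForm p m (v j))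
      ≤ homogeneousSubmodule (Fin m) (ZMod p) 1 :=
    Submodule.span_le.mpr <| Set.range_subset_iff.mpr fun j => isHomogeneous_linForm p m (v j)
  have hirr : ∀ w ∈ S, Irreducible w := fun w hw =>
    irreducible_of_isHomogeneous_one (hW (hS.1 w hw).1) (hS.1 w hw).2
  refine Finset.prod_dvd_of_isRelPrime (fun a ha b hb hab => ?_)
    fun w hw => dvd_det_of_mem_span _ d (hS.1 w hw).1 (hS.1 w hw).2
  refine (hirr a ha).isRelPrime_iff_not_dvd.mpr fun hdvd => hab ?_
  have hassoc : Associated a b :=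
    (((hirr b hb).dvd_iff.mp hdvd).resolve_left (hirr a ha).not_isUnit).symm
  obtain ⟨c, hc⟩ := exists_eq_smul_of_associated hassoc
  exact hS.eq_of_eq_smul ha hb hc

/-- if `w_1, …, w_m` are linearly independent linear forms with span `W`
and `S` is a system of line representatives for `W`, then `Δ(W) = ∏_{w ∈ S} w`
divides `det M(w_1,…,w_m; d_1,…,d_m)`. -/
theorem stmt1 (p m : ℕ) [Fact p.Prime] (hm : 1 ≤ m)
    (v : Fin m → Fin m → ZMod p)
    (hind : LinearIndependent (ZMod p) (fun j => linForm p m (v j)))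
    (d : Fin m → ℕ)
    (S : Finset (MvPolynomial (Fin m) (ZMod p)))
    (hS : IsLineReps (Submodule.span (ZMod p) (Set.range fun j => linForm p m (v j))) S) :
    (∏ w ∈ S, w) ∣
      Matrix.det (Matrix.of fun i j : Fin m => (linForm p m (v j)) ^ p ^ d i) :=
  stmt1_general p m v d S hS
end

section
/- Let w_1, …, w_m be linearly independent linear forms in B and let d_1, …, d_m be natural numbers. Then det M(w_1,…,w_m; d_1,…,d_m) is nonzero if and only if d_1, …, d_m are pairwise distinct. -/
/-!
Equal exponents give equal rows, so the determinant vanishes. Conversely, since the `w_j` are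
linearly independent, the substitution `X_j ↦ w_j` is injective on `B` (the substitution along
the rows of the inverse coefficient matrix undoes it); it maps `M(X_1,…,X_m; d)` to
`M(w_1,…,w_m; d)`, so it suffices to treat the variables themselves. There the exponents
`p ^ d_i` are pairwise distinct, so in the Leibniz expansion the monomial `∏ X_i ^ (p ^ d_i)`
comes from the identity permutation alone and has coefficient `1`.
-/

open MvPolynomial

section VariablePowers

variable {R n : Type*} [CommRing R] [Fintype n]

theorem prod_X_pow_eq_monomial_equivFunOnFinite (e : n → ℕ) :
    ∏ i, (X i : MvPolynomial n R) ^ e i = monomial (Finsupp.equivFunOnFinite.symm e) 1 := by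
  rw [monomial_eq, C_1, one_mul, Finsupp.prod_fintype _ _ fun _ => pow_zero _]
  rfl

variable [DecidableEq n]

theorem coeff_det_X_pow_of_injective {e : n → ℕ} (he : Function.Injective e) :
    coeff (Finsupp.equivFunOnFinite.symm e)
      (Matrix.of fun i j => (X j : MvPolynomial n R) ^ e i).det = 1 := by
  have hterm (σ : Equiv.Perm n) :
      coeff (Finsupp.equivFunOnFinite.symm e)
        (Equiv.Perm.sign σ • ∏ i, (Matrix.of fun i j => (X j : MvPolynomial n R) ^ e i) (σ i) i) =
      if σ = 1 then 1 else 0 := by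
    have hprod : ∏ i, (Matrix.of fun i j => (X j : MvPolynomial n R) ^ e i) (σ i) i =
        monomial (Finsupp.equivFunOnFinite.symm (e ∘ σ)) 1 :=
      prod_X_pow_eq_monomial_equivFunOnFinite (e ∘ σ)
    have hσ : e ∘ σ = e ↔ σ = 1 :=
      ⟨fun h => Equiv.ext fun i => he (congrFun h i), fun h => by rw [h]; rfl⟩
    rw [hprod, Units.smul_def, coeff_smul, coeff_monomial]
    simp only [Equiv.apply_eq_iff_eq, hσ]
    split_ifs with h <;> simp [h]
  rw [Matrix.det_apply, coeff_sum, Finset.sum_congr rfl fun σ _ => hterm σ,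
    Finset.sum_ite_eq' Finset.univ 1, if_pos (Finset.mem_univ _)]

theorem det_X_pow_ne_zero_of_injective [Nontrivial R] {e : n → ℕ} (he : Function.Injective e) :
    (Matrix.of fun i j => (X j : MvPolynomial n R) ^ e i).det ≠ 0 := fun h => by
  simpa [h] using coeff_det_X_pow_of_injective (R := R) he

end VariablePowers

section LinearForms

open scoped Matrix

variable {p m : ℕ}

theorem linForm_eq_linearCombination (u : Fin m → ZMod p) :
    linForm p m u = Fintype.linearCombination (ZMod p) X u := by
  simp only [linForm, Fintype.linearCombination_apply, smul_eq_C_mul]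

theorem linForm_single (i : Fin m) : linForm p m (Pi.single i 1) = X i := by
  rw [linForm_eq_linearCombination, Fintype.linearCombination_apply_single, one_smul]

theorem LinearIndependent.of_linForm {v : Fin m → Fin m → ZMod p}
    (hv : LinearIndependent (ZMod p) fun j => linForm p m (v j)) :
    LinearIndependent (ZMod p) v := by
  simp only [linForm_eq_linearCombination] at hv
  exact hv.of_comp _

theorem aeval_linForm_rows (A : Matrix (Fin m) (Fin m) (ZMod p)) (u : Fin m → ZMod p) :
    aeval (R := ZMod p) (fun i => linForm p m (A i)) (linForm p m u) = linForm p m (u ᵥ* A) := by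
  simp only [Matrix.vecMul_eq_sum, linForm_eq_linearCombination, Fintype.linearCombination_apply,
    map_sum, map_smul, aeval_X]

theorem aeval_linForm_injective [Fact p.Prime] {v : Fin m → Fin m → ZMod p}
    (hv : LinearIndependent (ZMod p) v) :
    Function.Injective (aeval (R := ZMod p) fun i => linForm p m (v i)) := by
  have hV : IsUnit (Matrix.of v).det :=
    (Matrix.isUnit_iff_isUnit_det _).mp (Matrix.linearIndependent_rows_iff_isUnit.mp hv)
  have hinv : (aeval fun i => linForm p m ((Matrix.of v)⁻¹ i)).comp
      (aeval fun i => linForm p m (v i)) = AlgHom.id (ZMod p) _ := by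
    refine algHom_ext fun i => ?_
    have hrow : v i ᵥ* (Matrix.of v)⁻¹ = Pi.single i 1 := by
      rw [show v i ᵥ* (Matrix.of v)⁻¹ = (Matrix.of v * (Matrix.of v)⁻¹) i from rfl,
        Matrix.mul_nonsing_inv _ hV]
      exact funext fun j => Matrix.one_eq_pi_single
    rw [AlgHom.comp_apply, aeval_X, aeval_linForm_rows, hrow, linForm_single, AlgHom.id_apply]
  refine Function.LeftInverse.injective (g := aeval fun i => linForm p m ((Matrix.of v)⁻¹ i)) ?_
  exact fun q => by simpa only [AlgHom.comp_apply, AlgHom.id_apply] using AlgHom.congr_fun hinv q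

end LinearForms

theorem stmt3_general (p m : ℕ) [Fact p.Prime]
    (v : Fin m → Fin m → ZMod p)
    (hind : LinearIndependent (ZMod p) (fun j => linForm p m (v j)))
    (d : Fin m → ℕ) :
    Matrix.det (Matrix.of fun i j : Fin m => (linForm p m (v j)) ^ p ^ d i) ≠ 0 ↔
      Function.Injective d := by
  refine ⟨fun hdet i j hij => ?_, fun hd => ?_⟩
  · by_contra hne
    exact hdet (Matrix.det_zero_of_row_eq hne (funext fun k => by simp [hij]))
  · have hsubst : (Matrix.of fun i j : Fin m => (linForm p m (v j)) ^ p ^ d i) =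
        (aeval fun i => linForm p m (v i)).mapMatrix
          (Matrix.of fun i j => (X j : MvPolynomial (Fin m) (ZMod p)) ^ p ^ d i) := by
      ext i j
      simp
    have hpow : Function.Injective fun i => p ^ d i :=
      (Nat.pow_right_injective (Fact.out : p.Prime).two_le).comp hd
    rw [hsubst, ← AlgHom.map_det, map_ne_zero_iff _ (aeval_linForm_injective hind.of_linForm)]
    exact det_X_pow_ne_zero_of_injective hpow

/-- for linearly independent linear forms `w_1, …, w_m`,
`det M(w_1,…,w_m; d_1,…,d_m) ≠ 0` if and only if `d_1, …, d_m` are pairwise distinct. -/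
theorem stmt3 (p m : ℕ) [Fact p.Prime] (hm : 1 ≤ m)
    (v : Fin m → Fin m → ZMod p)
    (hind : LinearIndependent (ZMod p) (fun j => linForm p m (v j)))
    (d : Fin m → ℕ) :
    Matrix.det (Matrix.of fun i j : Fin m => (linForm p m (v j)) ^ p ^ d i) ≠ 0 ↔
      Function.Injective d :=
  stmt3_general p m v hind d
end

section
/- Let w_1, …, w_m be linearly independent linear forms in B with span W, fix j ∈ {1,…,m}, let W_j be the span of {w_1,…,w_m} \ {w_j}, and let S be a system of line representatives for W. Then there exists a nonzero scalar λ ∈ 𝔽_p such that det M(w_1,…,w_m) = λ · (∏_{w ∈ S, w ∉ W_j} w) · det M(w_1,…,ŵ_j,…,w_m), where the second determinant is that of the (m−1)×(m−1) matrix built from the linear forms with w_j omitted and exponents p^0, …, p^(m−2). -/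
open MvPolynomial

/-!
Replace the column of `w_j` in `M(w_1,…,w_m)` by the Frobenius powers `Y, Y^p, …, Y^(p^(m-1))`
of an indeterminate. Laplace expansion along that column makes the determinant a `p`-polynomial
in `Y` of degree `p^(m-1)` with leading coefficient `± det M(w_1,…,ŵ_j,…,w_m)`. Since
`u ↦ (u^(p^i))_i` is `𝔽_p`-linear, the determinant vanishes for `Y ∈ W_j`, a set of `p^(m-1)`
elements, so the polynomial is that leading coefficient times `∏_{u ∈ W_j} (Y - u)`.
At `Y = w_j`, each factor `w_j - u` is a nonzero multiple of a representative in `S` outside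
`W_j`, and every such representative occurs exactly once: its line meets the coset `w_j + W_j`
in a single point.
-/

namespace Polynomial

variable {R : Type*}

theorem natDegree_sum_C_mul_X_pow_pow_le [Semiring R] {p n : ℕ} (hp : 0 < p)
    (a : Fin (n + 1) → R) : (∑ i, C (a i) * X ^ p ^ (i : ℕ)).natDegree ≤ p ^ n :=
  natDegree_sum_le_of_forall_le _ _ fun i _ =>
    (natDegree_C_mul_X_pow_le _ _).trans (Nat.pow_le_pow_right hp (Nat.lt_succ_iff.1 i.isLt))

theorem coeff_sum_C_mul_X_pow_pow [Semiring R] {p n : ℕ} (hp : 1 < p)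
    (a : Fin (n + 1) → R) (k : Fin (n + 1)) :
    (∑ i, C (a i) * X ^ p ^ (i : ℕ)).coeff (p ^ (k : ℕ)) = a k := by
  simp only [finsetSum_coeff, coeff_C_mul_X_pow, (Nat.pow_right_injective hp).eq_iff,
    Fin.val_inj, Finset.sum_ite_eq, Finset.mem_univ, if_true]

theorem eq_C_coeff_mul_prod_X_sub_C_of_eval_eq_zero [CommRing R] [IsDomain R] {f : R[X]}
    {s : Finset R} (hdeg : f.natDegree ≤ s.card) (hroots : ∀ x ∈ s, f.eval x = 0) :
    f = C (f.coeff s.card) * ∏ x ∈ s, (X - C x) := by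
  set Q := ∏ x ∈ s, (X - C x)
  have hQ : Q.Monic := monic_prod_X_sub_C id s
  have hQdeg : Q.natDegree = s.card := natDegree_finsetProd_X_sub_C_eq_card s id
  rw [← sub_eq_zero]
  by_contra hg
  refine hg (eq_zero_of_natDegree_lt_card_of_eval_eq_zero' _ s (fun x hx => ?_) ?_)
  · simp [Q, hroots x hx, eval_prod, Finset.prod_eq_zero hx]
  · rw [natDegree_lt_iff_degree_lt hg, degree_lt_iff_coeff_zero]
    intro m hm
    obtain rfl | hm := eq_or_lt_of_le hm
    · rw [coeff_sub, coeff_C_mul, ← hQdeg, hQ.coeff_natDegree, mul_one, sub_self]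
    · rw [coeff_sub, coeff_C_mul, coeff_eq_zero_of_natDegree_lt (hdeg.trans_lt hm),
        coeff_eq_zero_of_natDegree_lt (hQdeg.trans_lt hm), mul_zero, sub_zero]

end Polynomial

section Moore

variable {R : Type*} [CommRing R] (p : ℕ)

def mooreMatrix {k : ℕ} (w : Fin k → R) : Matrix (Fin k) (Fin k) R :=
  Matrix.of fun i j => w j ^ p ^ (i : ℕ)

variable {p} {n : ℕ} (w : Fin (n + 1) → R) (j : Fin (n + 1))

theorem mooreMatrix_update (y : R) :
    mooreMatrix p (Function.update w j y) =
      (mooreMatrix p w).updateCol j fun i => y ^ p ^ (i : ℕ) := by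
  ext i k
  by_cases hk : k = j
  · subst hk; simp [mooreMatrix]
  · simp [mooreMatrix, hk]

theorem submatrix_mooreMatrix_last :
    (mooreMatrix p w).submatrix (Fin.last n).succAbove j.succAbove =
      mooreMatrix p (w ∘ j.succAbove) := by
  ext i k
  simp [mooreMatrix]

theorem det_mooreMatrix_update_eq_eval (y : R) :
    (mooreMatrix p (Function.update w j y)).det =
      (∑ i : Fin (n + 1), Polynomial.C ((-1) ^ ((i : ℕ) + j) *
        ((mooreMatrix p w).submatrix i.succAbove j.succAbove).det) *
          Polynomial.X ^ p ^ (i : ℕ)).eval y := by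
  rw [Matrix.det_succ_column _ j, Polynomial.eval_finsetSum]
  refine Finset.sum_congr rfl fun i _ => ?_
  have hminor : (mooreMatrix p (Function.update w j y)).submatrix i.succAbove j.succAbove =
      (mooreMatrix p w).submatrix i.succAbove j.succAbove := by
    ext k l
    simp [mooreMatrix, Fin.succAbove_ne j l]
  rw [hminor]
  simp only [Polynomial.eval_mul, Polynomial.eval_pow, Polynomial.eval_C, Polynomial.eval_X,
    mooreMatrix, Matrix.of_apply, Function.update_self]
  ring

variable [Fact p.Prime] [Algebra (ZMod p) R] [CharP R p]

theorem det_mooreMatrix_update_eq_zero {u : R}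
    (hu : u ∈ Submodule.span (ZMod p) (Set.range (w ∘ j.succAbove))) :
    (mooreMatrix p (Function.update w j u)).det = 0 := by
  rw [mooreMatrix_update]
  induction hu using Submodule.span_induction with
  | mem x hx =>
    obtain ⟨k, rfl⟩ := hx
    refine Matrix.det_zero_of_column_eq (Fin.succAbove_ne j k).symm fun i => ?_
    simp [mooreMatrix, Fin.succAbove_ne j k]
  | zero =>
    exact Matrix.det_eq_zero_of_column_eq_zero j fun i => by
      simp [(Fact.out : p.Prime).ne_zero]
  | add x y _ _ hx hy =>
    simp only [add_pow_char_pow]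
    rw [← Pi.add_def, Matrix.det_updateCol_add, hx, hy, add_zero]
  | smul c x _ hx =>
    have hcol : (fun i : Fin (n + 1) => (c • x) ^ p ^ (i : ℕ)) =
        algebraMap (ZMod p) R c • fun i : Fin (n + 1) => x ^ p ^ (i : ℕ) := by
      ext i
      rw [smul_pow, ZMod.pow_card_pow, Pi.smul_apply, algebraMap_smul]
    rw [hcol, Matrix.det_updateCol_smul, hx, mul_zero]

variable [IsDomain R]

theorem det_mooreMatrix_eq_mul_prod {s : Finset R}
    (hs : (s : Set R) = Submodule.span (ZMod p) (Set.range (w ∘ j.succAbove)))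
    (hcard : s.card = p ^ n) :
    (mooreMatrix p w).det =
      (-1) ^ (n + (j : ℕ)) * (mooreMatrix p (w ∘ j.succAbove)).det * ∏ u ∈ s, (w j - u) := by
  have hp : 1 < p := (Fact.out : p.Prime).one_lt
  set a : Fin (n + 1) → R := fun i =>
    (-1) ^ ((i : ℕ) + j) * ((mooreMatrix p w).submatrix i.succAbove j.succAbove).det
  set F := ∑ i : Fin (n + 1), Polynomial.C (a i) * Polynomial.X ^ p ^ (i : ℕ)
  have hroots : ∀ u ∈ s, F.eval u = 0 := fun u hu => by
    rw [← det_mooreMatrix_update_eq_eval]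
    exact det_mooreMatrix_update_eq_zero w j (by rwa [← SetLike.mem_coe, ← hs])
  have hF := Polynomial.eq_C_coeff_mul_prod_X_sub_C_of_eval_eq_zero
    (hcard ▸ Polynomial.natDegree_sum_C_mul_X_pow_pow_le hp.le a) hroots
  rw [hcard, ← Fin.val_last n, Polynomial.coeff_sum_C_mul_X_pow_pow hp] at hF
  have hdet : (mooreMatrix p w).det = F.eval (w j) := by
    rw [← det_mooreMatrix_update_eq_eval, Function.update_eq_self]
  simp only [hdet, hF, a, Polynomial.eval_mul, Polynomial.eval_C, Polynomial.eval_prod,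
    Polynomial.eval_sub, Polynomial.eval_X, submatrix_mooreMatrix_last, Fin.val_last]

end Moore

theorem card_eq_pow_of_coe_eq_span {p n : ℕ} [Fact p.Prime] {M : Type*} [AddCommGroup M]
    [Module (ZMod p) M] {v : Fin n → M} (hv : LinearIndependent (ZMod p) v) {s : Finset M}
    (hs : (s : Set M) = Submodule.span (ZMod p) (Set.range v)) : s.card = p ^ n := by
  have := Module.Finite.span_of_finite (ZMod p) (Set.finite_range v)
  rw [← Set.ncard_coe_finset, ← Nat.card_coe_set_eq, hs, SetLike.coe_sort_coe,
    Module.natCard_eq_pow_finrank (K := ZMod p), finrank_span_eq_card hv, Nat.card_zmod,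
    Fintype.card_fin]

namespace Submodule

variable {K M : Type*} [Field K] [AddCommGroup M] [Module K M] {W : Submodule K M} {x : M}

theorem exists_sub_smul_mem_of_mem_sup_of_notMem {r : M} (hr : r ∈ (K ∙ x) ⊔ W)
    (hrW : r ∉ W) : ∃ a : K, x - a • r ∈ W := by
  obtain ⟨y, hy, w, hw, rfl⟩ := mem_sup.1 hr
  obtain ⟨b, rfl⟩ := mem_span_singleton.1 hy
  have hb : b ≠ 0 := by
    rintro rfl
    exact hrW (by simpa using hw)
  refine ⟨b⁻¹, ?_⟩
  rw [smul_add, smul_smul, inv_mul_cancel₀ hb, one_smul, sub_add_cancel_left]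
  exact W.neg_mem (W.smul_mem _ hw)

theorem eq_of_sub_eq_smul_of_notMem {r u₁ u₂ : M} {c₁ c₂ : K} (hr : r ∉ W) (hu₁ : u₁ ∈ W)
    (hu₂ : u₂ ∈ W) (h₁ : x - u₁ = c₁ • r) (h₂ : x - u₂ = c₂ • r) : u₁ = u₂ := by
  obtain rfl | hc := eq_or_ne c₁ c₂
  · exact sub_right_injective (h₁.trans h₂.symm)
  · have hmem : (c₂ - c₁) • r ∈ W := by
      rw [sub_smul, ← h₁, ← h₂, sub_sub_sub_cancel_left]
      exact W.sub_mem hu₁ hu₂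
    exact absurd ((W.smul_mem_iff (sub_ne_zero.2 hc.symm)).1 hmem) hr

end Submodule

open scoped Classical in
theorem IsLineReps.prod_sub_eq_algebraMap_mul_prod {p : ℕ} [Fact p.Prime] {R : Type*}
    [CommRing R] [Algebra (ZMod p) R] {W : Submodule (ZMod p) R} {x : R} (hx : x ∉ W)
    {S : Finset R} (hS : IsLineReps ((ZMod p ∙ x) ⊔ W) S) {s : Finset R}
    (hs : (s : Set R) = W) :
    ∃ c : ZMod p, c ≠ 0 ∧
      ∏ u ∈ s, (x - u) = algebraMap (ZMod p) R c * ∏ r ∈ S.filter (· ∉ W), r := by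
  have hmem : ∀ u, u ∈ s ↔ u ∈ W := fun u => by rw [← Finset.mem_coe, hs, SetLike.mem_coe]
  have hsub : ∀ u ∈ s, x - u ∈ (ZMod p ∙ x) ⊔ W ∧ x - u ≠ 0 := fun u hu =>
    ⟨sub_mem (Submodule.mem_sup_left (Submodule.mem_span_singleton_self x))
      (Submodule.mem_sup_right ((hmem u).1 hu)),
    fun h => hx (sub_eq_zero.1 h ▸ (hmem u).1 hu)⟩
  have hrep : ∀ u ∈ s, ∃ r c, (r ∈ S ∧ r ∉ W) ∧ x - u = c • r := fun u hu => by
    obtain ⟨r, ⟨hrS, c, hc⟩, -⟩ := hS.2 _ (hsub u hu).1 (hsub u hu).2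
    refine ⟨r, c, ⟨hrS, fun hrW => hx ?_⟩, hc⟩
    rw [← sub_add_cancel x u, hc]
    exact W.add_mem (W.smul_mem c hrW) ((hmem u).1 hu)
  choose! e c he using hrep
  have hc : ∀ u ∈ s, c u ≠ 0 := fun u hu h0 =>
    (hsub u hu).2 (by rw [(he u hu).2, h0, zero_smul])
  have hbij : ∏ u ∈ s, e u = ∏ r ∈ S.filter (· ∉ W), r := by
    refine Finset.prod_nbij e (fun u hu => Finset.mem_filter.2 (he u hu).1) ?_ ?_ fun _ _ => rfl
    · intro u₁ hu₁ u₂ hu₂ heq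
      exact Submodule.eq_of_sub_eq_smul_of_notMem (he u₂ hu₂).1.2 ((hmem u₁).1 hu₁)
        ((hmem u₂).1 hu₂) (heq ▸ (he u₁ hu₁).2) (he u₂ hu₂).2
    · intro r hr
      obtain ⟨hrS, hrW⟩ := Finset.mem_filter.1 hr
      obtain ⟨a, ha⟩ := Submodule.exists_sub_smul_mem_of_mem_sup_of_notMem (hS.1 r hrS).1 hrW
      have hu := (hmem _).2 ha
      exact ⟨_, hu, (hS.2 _ (hsub _ hu).1 (hsub _ hu).2).unique
        ⟨(he _ hu).1.1, c _, (he _ hu).2⟩ ⟨hrS, a, sub_sub_cancel x _⟩⟩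
  refine ⟨∏ u ∈ s, c u, Finset.prod_ne_zero_iff.2 hc, ?_⟩
  rw [map_prod, ← hbij, ← Finset.prod_mul_distrib]
  exact Finset.prod_congr rfl fun u hu => by rw [(he u hu).2, Algebra.smul_def]

open scoped Classical in
theorem stmt5_general (p n : ℕ) [Fact p.Prime]
    (v : Fin (n + 1) → Fin (n + 1) → ZMod p)
    (hind : LinearIndependent (ZMod p) (fun j => linForm p (n + 1) (v j)))
    (j : Fin (n + 1))
    (S : Finset (MvPolynomial (Fin (n + 1)) (ZMod p)))
    (hS : IsLineReps
      (Submodule.span (ZMod p) (Set.range fun i => linForm p (n + 1) (v i))) S) :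
    ∃ lam : ZMod p, lam ≠ 0 ∧
      Matrix.det (Matrix.of fun i' j' : Fin (n + 1) =>
          (linForm p (n + 1) (v j')) ^ p ^ (i' : ℕ)) =
        MvPolynomial.C lam *
          (∏ w ∈ S.filter (fun w =>
            w ∉ Submodule.span (ZMod p)
              (Set.range fun j' : Fin n => linForm p (n + 1) (v (j.succAbove j')))), w) *
          Matrix.det (Matrix.of fun i' j' : Fin n =>
            (linForm p (n + 1) (v (j.succAbove j'))) ^ p ^ (i' : ℕ)) := by
  set w := fun i => linForm p (n + 1) (v i)
  set W := Submodule.span (ZMod p) (Set.range (w ∘ j.succAbove)) with hW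
  have hwj : w j ∉ W := by
    rw [hW, Set.range_comp, Fin.range_succAbove]
    exact hind.notMem_span_image (Set.notMem_compl_iff.2 rfl)
  have hspan : Submodule.span (ZMod p) (Set.range w) = (ZMod p ∙ w j) ⊔ W := by
    rw [hW, ← Submodule.span_insert, Set.range_comp, Fin.range_succAbove, ← Set.image_insert_eq,
      Set.insert_eq, Set.union_compl_self, Set.image_univ]
  have : Module.Finite (ZMod p) W := Module.Finite.span_of_finite _ (Set.finite_range _)
  have : Finite W := Module.finite_of_finite (ZMod p)
  obtain ⟨s, hs⟩ := (W : Set (MvPolynomial (Fin (n + 1)) (ZMod p))).toFinite.exists_finset_coe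
  have hcard := card_eq_pow_of_coe_eq_span (hind.comp _ Fin.succAbove_right_injective) hs
  obtain ⟨c, hc, hprod⟩ := IsLineReps.prod_sub_eq_algebraMap_mul_prod hwj (hspan ▸ hS) hs
  refine ⟨(-1) ^ (n + (j : ℕ)) * c, mul_ne_zero (pow_ne_zero _ (neg_ne_zero.2 one_ne_zero)) hc,
    (det_mooreMatrix_eq_mul_prod w j hs hcard).trans ?_⟩
  change _ = _ * (∏ r ∈ S.filter (· ∉ W), r) * (mooreMatrix p (w ∘ j.succAbove)).det
  rw [hprod, MvPolynomial.algebraMap_eq]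
  simp only [map_mul, map_pow, map_neg, map_one]
  ring

open scoped Classical in
/-- with `m = n + 1 ≥ 2`, `W_j` the span of the `w_i` with `i ≠ j` and `S`
a system of line representatives for `W = span{w_1,…,w_m}`, there is a nonzero `λ ∈ 𝔽_p`
with `det M(w_1,…,w_m) = λ · (∏_{w ∈ S, w ∉ W_j} w) · det M(w_1,…,ŵ_j,…,w_m)`. -/
theorem stmt5 (p n : ℕ) [Fact p.Prime] (hn : 1 ≤ n)
    (v : Fin (n + 1) → Fin (n + 1) → ZMod p)
    (hind : LinearIndependent (ZMod p) (fun j => linForm p (n + 1) (v j)))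
    (j : Fin (n + 1))
    (S : Finset (MvPolynomial (Fin (n + 1)) (ZMod p)))
    (hS : IsLineReps
      (Submodule.span (ZMod p) (Set.range fun i => linForm p (n + 1) (v i))) S) :
    ∃ lam : ZMod p, lam ≠ 0 ∧
      Matrix.det (Matrix.of fun i' j' : Fin (n + 1) =>
          (linForm p (n + 1) (v j')) ^ p ^ (i' : ℕ)) =
        MvPolynomial.C lam *
          (∏ w ∈ S.filter (fun w =>
            w ∉ Submodule.span (ZMod p)
              (Set.range fun j' : Fin n => linForm p (n + 1) (v (j.succAbove j')))), w) *
          Matrix.det (Matrix.of fun i' j' : Fin n =>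
            (linForm p (n + 1) (v (j.succAbove j'))) ^ p ^ (i' : ℕ)) :=
  stmt5_general p n v hind j S hS
end

section
/- Let w_1, …, w_m be linearly independent linear forms in B with span W, let S be a system of line representatives for W, and for each j let W_j be the span of {w_1,…,w_m} \ {w_j} and Δ_j := ∏_{w ∈ S, w ∉ W_j} w. Let D be the diagonal m×m matrix with D_{jj} = Δ_j. Then there exists a matrix U ∈ M_m(B) such that U · M(w_1,…,w_m) = D. -/
open MvPolynomial

/-!
For each `j` the subspace polynomial `P_j(t) = ∏_{u ∈ W_j} (t - u)` is linearized,
`P_j(t) = ∑_{k < m} a_k t^{p^k}`: adjoining a vector `u ∉ V` to a subspace `V` turns `P_V` into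
`∏_c P_V(t - c u) = P_V(t)^p - P_V(u)^{p-1} P_V(t)`. Hence `P_j(w_i) = 0` for `i ≠ j`, while
`P_j(w_j) = ∏_{u ∈ W_j} (w_j - u)` is a nonzero multiple of `Δ_j`, because the lines of `W`
not in `W_j` are exactly the lines through the points of the affine hyperplane `w_j + W_j`.
Suitably rescaled, the coefficient vectors of the `P_j` are the rows of `U`.
-/

theorem FiniteField.prod_X_sub_C_eq_X_pow_card_sub_X (K : Type*) [Field K] [Fintype K] :
    ∏ c : K, (Polynomial.X - Polynomial.C c) =
      (Polynomial.X ^ Fintype.card K - Polynomial.X : Polynomial K) := by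
  have hmonic : (Polynomial.X ^ Fintype.card K - Polynomial.X : Polynomial K).Monic :=
    Polynomial.monic_X_pow_sub (by simpa using Fintype.one_lt_card)
  have hroots := FiniteField.roots_X_pow_card_sub_X K
  rw [← Polynomial.prod_multiset_X_sub_C_of_monic_of_roots_card_eq hmonic, hroots]
  · rfl
  · rw [hroots, FiniteField.X_pow_card_sub_X_natDegree_eq K Fintype.one_lt_card]
    rfl

theorem FiniteField.prod_sub_smul_eq {K A : Type*} [Field K] [Fintype K] [CommRing A]
    [Algebra K A] (x y : A) :
    ∏ c : K, (x - c • y) = x ^ Fintype.card K - y ^ (Fintype.card K - 1) * x := by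
  set q := Fintype.card K
  have hq : 1 < q := Fintype.one_lt_card
  have hlhs : (∏ c : K, (Polynomial.X - Polynomial.C c)).homogenize q =
      ∏ c : K, (X 0 - C c * X 1) := by
    have h := Polynomial.homogenize_finsetProd (s := Finset.univ)
      (p := fun c : K => Polynomial.X - Polynomial.C c) (n := fun _ => 1)
      fun c _ => (Polynomial.natDegree_X_sub_C c).le
    rw [Finset.sum_const, Finset.card_univ, smul_eq_mul, mul_one] at h
    rw [h]
    refine Finset.prod_congr rfl fun c _ => ?_
    rw [Polynomial.homogenize_sub, Polynomial.homogenize_X one_ne_zero, Polynomial.homogenize_C]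
    simp
  have hrhs : (Polynomial.X ^ q - Polynomial.X : Polynomial K).homogenize q =
      X 0 ^ q - X 0 * X 1 ^ (q - 1) := by
    rw [Polynomial.homogenize_sub, Polynomial.homogenize_X_pow le_rfl,
      Polynomial.homogenize_X (by omega)]
    simp
  have hhom : ∏ c : K, (X 0 - C c * X 1 : MvPolynomial (Fin 2) K) =
      X 0 ^ q - X 0 * X 1 ^ (q - 1) := by
    rw [← hlhs, ← hrhs, prod_X_sub_C_eq_X_pow_card_sub_X]
  simpa [Algebra.smul_def, mul_comm] using congrArg (aeval ![x, y]) hhom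

namespace Submodule

theorem exists_finset_coe_eq_span {K M : Type*} [DivisionRing K] [Finite K]
    [AddCommGroup M] [Module K M] {s : Set M} (hs : s.Finite) :
    ∃ T : Finset M, (T : Set M) = span K s := by
  have : Module.Finite K (span K s) := FiniteDimensional.span_of_finite K hs
  have : Finite (span K s) := Module.finite_of_finite K
  exact ⟨(span K s : Set M).toFinite.toFinset, Set.Finite.coe_toFinset _⟩

theorem prod_sup_span_singleton {K M β : Type*} [DivisionRing K] [Fintype K]
    [AddCommGroup M] [Module K M] [CommMonoid β] {V : Submodule K M} {u : M} (hu : u ∉ V)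
    {T T' : Finset M} (hT : (T : Set M) = (K ∙ u ⊔ V : Submodule K M))
    (hT' : (T' : Set M) = V) (f : M → β) :
    ∏ x ∈ T, f x = ∏ c : K, ∏ y ∈ T', f (c • u + y) := by
  have hmem : ∀ x, x ∈ T ↔ x ∈ K ∙ u ⊔ V := fun x => by rw [← Finset.mem_coe, hT]; rfl
  have hmem' : ∀ x, x ∈ T' ↔ x ∈ V := fun x => by rw [← Finset.mem_coe, hT']; rfl
  rw [← Finset.prod_product']
  symm
  refine Finset.prod_nbij (fun z => z.1 • u + z.2) ?_ ?_ ?_ fun _ _ => rfl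
  · rintro ⟨c, y⟩ hz
    exact (hmem _).2 (add_mem_sup (mem_span_singleton.2 ⟨c, rfl⟩)
      ((hmem' y).1 (Finset.mem_product.1 hz).2))
  · rintro ⟨c₁, y₁⟩ h₁ ⟨c₂, y₂⟩ h₂ heq
    have hy₁ := (hmem' y₁).1 (Finset.mem_product.1 h₁).2
    have hy₂ := (hmem' y₂).1 (Finset.mem_product.1 h₂).2
    have hdiff : (c₁ - c₂) • u = y₂ - y₁ := by
      simp only at heq
      rw [sub_smul, sub_eq_sub_iff_add_eq_add, heq, add_comm]
    have hc : c₁ = c₂ := by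
      by_contra hne
      exact hu ((smul_mem_iff V (sub_ne_zero.2 hne)).1 (hdiff ▸ V.sub_mem hy₂ hy₁))
    subst hc
    simp_all
  · intro x hx
    obtain ⟨_, hz, y, hy, rfl⟩ := mem_sup.1 ((hmem x).1 hx)
    obtain ⟨c, rfl⟩ := mem_span_singleton.1 hz
    exact ⟨(c, y), by simp [hmem' y, hy], rfl⟩

theorem exists_sub_smul_mem_of_mem_sup_of_notMem_s6 {K M : Type*} [DivisionRing K]
    [AddCommGroup M] [Module K M] {V : Submodule K M} {w s : M} (hs : s ∈ K ∙ w ⊔ V)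
    (hsV : s ∉ V) : ∃ d : K, w - d • s ∈ V := by
  obtain ⟨_, hz, y, hy, rfl⟩ := mem_sup.1 hs
  obtain ⟨d, rfl⟩ := mem_span_singleton.1 hz
  have hd : d ≠ 0 := by
    rintro rfl
    exact hsV (by simpa using hy)
  refine ⟨d⁻¹, ?_⟩
  rw [smul_add, smul_smul, inv_mul_cancel₀ hd, one_smul, sub_add_cancel_left]
  exact V.neg_mem (V.smul_mem _ hy)

end Submodule

theorem IsLineReps.exists_prod_eq_smul_prod_sub {p : ℕ} [Fact p.Prime] {R : Type*} [CommRing R]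
    [Algebra (ZMod p) R] {V : Submodule (ZMod p) R} {w : R}
    {S : Finset R} (hS : IsLineReps ((ZMod p) ∙ w ⊔ V) S) (hw : w ∉ V) {T : Finset R}
    (hT : (T : Set R) = V) [DecidablePred (· ∉ V)] :
    ∃ γ : ZMod p, ∏ s ∈ S with s ∉ V, s = γ • ∏ u ∈ T, (w - u) := by
  have hmem : ∀ u, u ∈ T ↔ u ∈ V := fun u => by rw [← Finset.mem_coe, hT]; rfl
  have hwu : ∀ u ∈ T, w - u ∉ V := fun u hu => by
    rwa [V.sub_mem_iff_left ((hmem u).1 hu)]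
  have hline : ∀ u ∈ T, ∃! s, s ∈ S ∧ ∃ c : ZMod p, w - u = c • s := fun u hu =>
    hS.2 _ (sub_mem (Submodule.mem_sup_left (Submodule.mem_span_singleton_self w))
      (Submodule.mem_sup_right ((hmem u).1 hu))) fun h => hwu u hu (h ▸ V.zero_mem)
  -- `u ↦ r u` is a bijection from `V` onto the representatives outside `V`
  choose! r hr c hc using fun u hu => (hline u hu).exists
  have hcr : ∀ u ∈ T, c u ≠ 0 ∧ r u ∉ V := fun u hu => by
    have := hwu u hu
    rw [hc u hu] at this
    exact ⟨fun h0 => this (by rw [h0, zero_smul]; exact V.zero_mem),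
      fun hs => this (V.smul_mem _ hs)⟩
  have hprod : ∏ s ∈ S with s ∉ V, s = ∏ u ∈ T, r u := by
    symm
    refine Finset.prod_nbij r (fun u hu => Finset.mem_filter.2 ⟨hr u hu, (hcr u hu).2⟩) ?_ ?_
      fun _ _ => rfl
    · intro u₁ h₁ u₂ h₂ heq
      have hdiff : (c u₁ - c u₂) • r u₂ = u₂ - u₁ := by
        rw [sub_smul, ← hc u₂ h₂, ← heq, ← hc u₁ h₁]; abel
      have hc : c u₁ = c u₂ := by
        by_contra hne
        exact (hcr u₂ h₂).2 ((Submodule.smul_mem_iff V (sub_ne_zero.2 hne)).1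
          (hdiff ▸ V.sub_mem ((hmem _).1 h₂) ((hmem _).1 h₁)))
      simp only [hc, sub_self, zero_smul] at hdiff
      exact (sub_eq_zero.1 hdiff.symm).symm
    · intro s hs
      obtain ⟨hsS, hsV⟩ := Finset.mem_filter.1 hs
      obtain ⟨d, hd⟩ := Submodule.exists_sub_smul_mem_of_mem_sup_of_notMem_s6 (hS.1 s hsS).1 hsV
      have huT := (hmem _).2 hd
      exact ⟨_, huT,
        (hline _ huT).unique ⟨hr _ huT, _, hc _ huT⟩ ⟨hsS, d, sub_sub_cancel w _⟩⟩
  refine ⟨∏ u ∈ T, (c u)⁻¹, ?_⟩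
  rw [hprod, ← Finset.prod_smul]
  refine Finset.prod_congr rfl fun u hu => ?_
  rw [hc u hu, smul_smul, inv_mul_cancel₀ (hcr u hu).1, one_smul]

section LinearizedPolynomial

variable {R : Type*} [CommRing R]

variable (p : ℕ) in
def linearizedEval {n : ℕ} (a : Fin n → R) (t : R) : R :=
  ∑ k, a k * t ^ p ^ (k : ℕ)

variable {p : ℕ}

theorem linearizedEval_snoc_zero {n : ℕ} (a : Fin n → R) (t : R) :
    linearizedEval p (Fin.snoc a 0) t = linearizedEval p a t := by
  simp [linearizedEval, Fin.sum_univ_castSucc]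

theorem linearizedEval_cons_zero_pow [ExpChar R p] {n : ℕ} (a : Fin n → R) (t : R) :
    linearizedEval p (Fin.cons 0 fun k => a k ^ p) t = linearizedEval p a t ^ p := by
  simp [linearizedEval, Fin.sum_univ_succ, sum_pow_char, mul_pow, ← pow_mul, pow_succ]

theorem linearizedEval_sub_mul {n : ℕ} (a b : Fin n → R) (e t : R) :
    linearizedEval p (fun k => a k - e * b k) t =
      linearizedEval p a t - e * linearizedEval p b t := by
  simp only [linearizedEval, sub_mul, mul_assoc, Finset.sum_sub_distrib, Finset.mul_sum]

theorem exists_linearizedEval_eq_pow_sub_mul [ExpChar R p] {n : ℕ} (a : Fin n → R) (e : R) :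
    ∃ b : Fin (n + 1) → R, ∀ t,
      linearizedEval p b t = linearizedEval p a t ^ p - e * linearizedEval p a t :=
  ⟨fun k => (Fin.cons 0 fun k => a k ^ p : Fin (n + 1) → R) k -
      e * (Fin.snoc a 0 : Fin (n + 1) → R) k, fun t => by
    rw [linearizedEval_sub_mul, linearizedEval_cons_zero_pow (p := p), linearizedEval_snoc_zero]⟩

variable [Fact p.Prime] [CharP R p] [Algebra (ZMod p) R]

theorem linearizedEval_sub_smul {n : ℕ} (a : Fin n → R) (t u : R) (c : ZMod p) :
    linearizedEval p a (t - c • u) = linearizedEval p a t - c • linearizedEval p a u := by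
  simp only [linearizedEval, sub_pow_char_pow, smul_pow, ZMod.pow_card_pow, mul_sub,
    mul_smul_comm, Finset.sum_sub_distrib, Finset.smul_sum]

theorem exists_linearizedEval_eq_prod_sub {n : ℕ} (g : Fin n → R)
    (hg : LinearIndependent (ZMod p) g) (T : Finset R)
    (hT : (T : Set R) = Submodule.span (ZMod p) (Set.range g)) :
    ∃ a : Fin (n + 1) → R, ∀ t, ∏ u ∈ T, (t - u) = linearizedEval p a t := by
  induction n generalizing T with
  | zero =>
    have hT0 : T = {0} := by
      rw [← Finset.coe_inj, hT, Set.range_eq_empty, Submodule.span_empty]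
      simp
    exact ⟨fun _ => 1, fun t => by simp [hT0, linearizedEval]⟩
  | succ n ih =>
    obtain ⟨g', u, rfl⟩ : ∃ g' u, g = Fin.snoc g' u :=
      ⟨Fin.init g, g (Fin.last n), (Fin.snoc_init_self g).symm⟩
    obtain ⟨hg', hu⟩ := linearIndependent_finSnoc.1 hg
    obtain ⟨T', hT'⟩ := Submodule.exists_finset_coe_eq_span (K := ZMod p) (Set.finite_range g')
    obtain ⟨a, ha⟩ := ih g' hg' T' hT'
    obtain ⟨b, hb⟩ :=
      exists_linearizedEval_eq_pow_sub_mul (p := p) a (linearizedEval p a u ^ (p - 1))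
    rw [Fin.range_snoc, Submodule.span_insert] at hT
    refine ⟨b, fun t => ?_⟩
    calc ∏ x ∈ T, (t - x)
        = ∏ c : ZMod p, ∏ y ∈ T', (t - c • u - y) := by
          simp only [Submodule.prod_sup_span_singleton hu hT hT', sub_add_eq_sub_sub]
      _ = ∏ c : ZMod p, (linearizedEval p a t - c • linearizedEval p a u) := by
          simp only [ha, linearizedEval_sub_smul]
      _ = linearizedEval p b t := by
          rw [FiniteField.prod_sub_smul_eq, ZMod.card, hb]

theorem exists_linearizedEval_eq_ite {n : ℕ} (w : Fin (n + 1) → R)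
    (hw : LinearIndependent (ZMod p) w) {S : Finset R}
    (hS : IsLineReps (Submodule.span (ZMod p) (Set.range w)) S) (j : Fin (n + 1))
    [DecidablePred (· ∉ Submodule.span (ZMod p) (w '' {i | i ≠ j}))] :
    ∃ r : Fin (n + 1) → R, ∀ i, linearizedEval p r (w i) =
      if j = i then ∏ s ∈ S with s ∉ Submodule.span (ZMod p) (w '' {i | i ≠ j}), s
      else 0 := by
  have hsplit : Submodule.span (ZMod p) (Set.range w) =
      (ZMod p) ∙ w j ⊔ Submodule.span (ZMod p) (w '' {i | i ≠ j}) := by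
    rw [← Set.insert_image_compl_eq_range w j, Submodule.span_insert]
    rfl
  obtain ⟨T, hT⟩ :=
    Submodule.exists_finset_coe_eq_span (K := ZMod p) ((Set.toFinite {i | i ≠ j}).image w)
  obtain ⟨a, ha⟩ := exists_linearizedEval_eq_prod_sub (w ∘ j.succAbove)
    (hw.comp _ Fin.succAbove_right_injective) T
    (by rw [hT, Set.range_comp, Fin.range_succAbove]; rfl)
  obtain ⟨γ, hγ⟩ := (hsplit ▸ hS).exists_prod_eq_smul_prod_sub
    (hw.notMem_span_image (by simp)) hT
  refine ⟨γ • a, fun i => ?_⟩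
  have hsmul : linearizedEval p (γ • a) (w i) = γ • ∏ u ∈ T, (w i - u) := by
    simp only [linearizedEval, Pi.smul_apply, smul_mul_assoc, ← Finset.smul_sum, ha]
  rw [hsmul]
  split_ifs with hji
  · rw [← hji, hγ]
  · have hwi : w i ∈ T := by
      rw [← Finset.mem_coe, hT]
      exact Submodule.subset_span ⟨i, Ne.symm hji, rfl⟩
    rw [Finset.prod_eq_zero hwi (sub_self _), smul_zero]

end LinearizedPolynomial

open scoped Classical in
/-- with `W_j` the span of the `w_i` for `i ≠ j`,
`Δ_j = ∏_{w ∈ S, w ∉ W_j} w` and `D = diag(Δ_1, …, Δ_m)`, there is a matrix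
`U ∈ M_m(B)` with `U · M(w_1,…,w_m) = D`. -/
theorem stmt6 (p m : ℕ) [Fact p.Prime] (hm : 1 ≤ m)
    (v : Fin m → Fin m → ZMod p)
    (hind : LinearIndependent (ZMod p) (fun j => linForm p m (v j)))
    (S : Finset (MvPolynomial (Fin m) (ZMod p)))
    (hS : IsLineReps
      (Submodule.span (ZMod p) (Set.range fun i => linForm p m (v i))) S) :
    ∃ U : Matrix (Fin m) (Fin m) (MvPolynomial (Fin m) (ZMod p)),
      U * (Matrix.of fun i j : Fin m => (linForm p m (v j)) ^ p ^ (i : ℕ)) =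
        Matrix.diagonal (fun j =>
          ∏ w ∈ S.filter (fun w =>
            w ∉ Submodule.span (ZMod p)
              ((fun i => linForm p m (v i)) '' {i | i ≠ j})), w) := by
  obtain ⟨n, rfl⟩ : ∃ n, m = n + 1 := ⟨m - 1, by omega⟩
  choose U hU using fun j =>
    exists_linearizedEval_eq_ite (fun i => linForm p (n + 1) (v i)) hind hS j
  refine ⟨Matrix.of U, Matrix.ext fun i j => ?_⟩
  rw [Matrix.mul_apply, Matrix.diagonal_apply]
  exact hU i j
end

section
/- Suppose V carries the structure of a Lie algebra over 𝔽_p with bracket ⁅ , ⁆, and ⟨ , ⟩ : V × V → 𝔽_p is a bilinear form satisfying ⟨⁅x,y⁆, z⟩ = −⟨y, ⁅x,z⁆⟩ for all x, y, z ∈ V. Let X, Y ∈ B and s ≥ 0 be such that for every x ∈ V and every r ≥ s, (ad x)^{[p^r]}(Y) ∈ X·B, where ad x is the endomorphism v ↦ ⁅x,v⁆ of V. Then for all x, y ∈ V, D_f(Y) ∈ X·B, where f ∈ V* is the functional f(v) = ⟨y, ⁅x,v⁆⟩. -/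
open MvPolynomial

/-- For `f ∈ V*`, the unique `𝔽_p`-linear derivation `D_f` of `B` with
`D_f(X_i) = f(e_i)` (a constant) for each `i`. -/
noncomputable def constDer (p m : ℕ) (f : (Fin m → ZMod p) →ₗ[ZMod p] ZMod p) :
    Derivation (ZMod p) (MvPolynomial (Fin m) (ZMod p)) (MvPolynomial (Fin m) (ZMod p)) :=
  MvPolynomial.mkDerivation (ZMod p) fun i => MvPolynomial.C (f (Pi.single i 1))

/-- For an endomorphism `φ` of `V` and `r ≥ 0`, the unique `𝔽_p`-linear derivation
`φ^{[p^r]}` of `B` with `φ^{[p^r]}(X_i) = ℓ(φ(e_i))^(p^r)` for each `i`. -/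
noncomputable def frobDer (p m : ℕ)
    (φ : (Fin m → ZMod p) →ₗ[ZMod p] (Fin m → ZMod p)) (r : ℕ) :
    Derivation (ZMod p) (MvPolynomial (Fin m) (ZMod p)) (MvPolynomial (Fin m) (ZMod p)) :=
  MvPolynomial.mkDerivation (ZMod p) fun i => (linForm p m (φ (Pi.single i 1))) ^ p ^ r

/-!
Write `∇Y = ∑ᵢ ∂ᵢY ⊗ eᵢ` and `G(z) = (id ⊗ ad z)(∇Y)`. Then `(ad z)^{[p^r]}(Y) = ∑ⱼ Gⱼ(z) Xⱼ^{p^r}`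
and `D_{x,y} := D_f(Y) = ⟨y, G(x)⟩` for `f = ⟨y, ⁅x, ·⁆⟩`. By unique factorisation it suffices to
treat `X = ρ^A` with `ρ` prime. Two linear forms divisible by `ρ` are proportional (differentiate),
so the `𝔽_p`-linear relations among the `Xⱼ` modulo `ρ` are the multiples of a single `c₀`. A
Moore-determinant (Frobenius-twist) argument in the fraction field of `B/ρ` shows that a vector `u`
with `∑ uⱼ Xⱼ^{p^r} ≡ 0` for all large `r` is a multiple of `c₀` modulo `ρ`, and lifting through
the powers of `ρ` gives `G(z) ≡ ν(z) c₀ (mod ρ^A)` for every `z`. Hence `D_{x,y} ≡ ν(x)⟨y, c₀⟩`;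
but the invariance of the form and the alternation of the bracket make `D_{x,y}` skew with
`D_{y,y} = 0`, which forces `D_{x,y} ≡ 0`.
-/

section FrobeniusTwists

variable {p : ℕ} [Fact p.Prime] {L : Type*} [Field L] [Algebra (ZMod p) L]

theorem exists_algebraMap_eq_of_pow_char_eq_self {x : L} (hx : x ^ p = x) :
    ∃ a : ZMod p, algebraMap (ZMod p) L a = x := by
  have : CharP L p := charP_of_injective_algebraMap (algebraMap (ZMod p) L).injective p
  obtain ⟨a, ha⟩ : x ∈ (ZMod.castHom dvd_rfl L).fieldRange := by
    rw [ZMod.fieldRange_castHom_eq_bot p]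
    exact (Subfield.mem_bot_iff_pow_eq_self L p).mpr hx
  exact ⟨a, by rwa [RingHom.ext_zmod (algebraMap (ZMod p) L) (ZMod.castHom dvd_rfl L)]⟩

theorem eq_zero_of_forall_sum_mul_pow_char_pow_eq_zero {ι : Type*} [Fintype ι] (t u : ι → L)
    (R : ℕ) (ht : ∀ c : ι → ZMod p, (∀ j, u j = 0 → c j = 0) → ∑ j, c j • t j = 0 → c = 0)
    (hu : ∀ r ≥ R, ∑ j, u j * t j ^ p ^ r = 0) : u = 0 := by
  classical
  have : CharP L p := charP_of_injective_algebraMap (algebraMap (ZMod p) L).injective p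
  induction hn : (Finset.univ.filter (u · ≠ 0)).card using Nat.strong_induction_on
    generalizing u R with
  | _ n ih =>
  by_contra hne
  obtain ⟨a, ha⟩ : ∃ a, u a ≠ 0 := Function.ne_iff.mp hne
  -- `w` satisfies the relations from `R + 1` on (combine the `p`-th power of the relation at `r`
  -- with the one at `r + 1`) and has smaller support, so by induction every `u j / u a` is fixed
  -- by Frobenius, i.e. lies in `𝔽_p`; the relation at `R` then becomes an `𝔽_p`-relation.
  set w : ι → L := fun j => u j ^ p * u a - u j * u a ^ p
  have hw_supp : ∀ j, u j = 0 → w j = 0 := fun j hj => by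
    simp [w, hj, (Fact.out : p.Prime).ne_zero]
  have hw : w = 0 := by
    refine ih _ ?_ w (R + 1) (fun c hc => ht c fun j hj => hc j (hw_supp j hj)) ?_ rfl
    · rw [← hn]
      refine Finset.card_lt_card ⟨Finset.monotone_filter_right _ fun j _ hj hu => hj
        (hw_supp j hu), fun h => ?_⟩
      have := (Finset.mem_filter.mp (h (Finset.mem_filter.mpr ⟨Finset.mem_univ a, ha⟩))).2
      exact this (by ring)
    · intro r hr
      obtain ⟨r, rfl⟩ : ∃ r', r = r' + 1 := ⟨r - 1, by omega⟩
      have hpow : ∑ j, u j ^ p * t j ^ p ^ (r + 1) = (∑ j, u j * t j ^ p ^ r) ^ p := by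
        rw [sum_pow_char]
        simp only [mul_pow, ← pow_mul, ← pow_succ]
      calc ∑ j, w j * t j ^ p ^ (r + 1)
          = u a * ∑ j, u j ^ p * t j ^ p ^ (r + 1) - u a ^ p * ∑ j, u j * t j ^ p ^ (r + 1) := by
            simp only [w, Finset.mul_sum, ← Finset.sum_sub_distrib]
            exact Finset.sum_congr rfl fun j _ => by ring
        _ = 0 := by
            rw [hpow, hu r (by omega), hu (r + 1) (by omega)]
            simp [(Fact.out : p.Prime).ne_zero]
  have hratio : ∀ j, ∃ c : ZMod p, algebraMap (ZMod p) L c = u j / u a := fun j =>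
    exists_algebraMap_eq_of_pow_char_eq_self <| by
      rw [div_pow, div_eq_div_iff (pow_ne_zero p ha) ha]
      exact sub_eq_zero.mp (congrFun hw j)
  choose c hc using hratio
  have hca : c a = 1 := (algebraMap (ZMod p) L).injective (by rw [hc, div_self ha, map_one])
  refine one_ne_zero (hca.symm.trans (congrFun (ht c (fun j hj => ?_) ?_) a))
  · exact (algebraMap (ZMod p) L).injective (by rw [hc, hj, zero_div, map_zero])
  · have hu_eq : ∀ j, u j = u a * algebraMap (ZMod p) L (c j) := fun j => by
      rw [hc, mul_div_cancel₀ _ ha]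
    have hsum : ∑ j, u j * t j ^ p ^ R = u a * (∑ j, c j • t j) ^ p ^ R := by
      rw [sum_pow_char_pow, Finset.mul_sum]
      refine Finset.sum_congr rfl fun j _ => ?_
      conv_lhs => rw [hu_eq j]
      rw [Algebra.smul_def, mul_pow, ← map_pow, ZMod.pow_card_pow, mul_assoc]
    rw [hu R le_rfl, eq_comm, mul_eq_zero, or_iff_right ha] at hsum
    exact pow_eq_zero_iff (pow_ne_zero R (Fact.out : p.Prime).ne_zero) |>.mp hsum

end FrobeniusTwists

theorem dvd_of_forall_prime_pow_dvd {α : Type*} [CommMonoidWithZero α]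
    [UniqueFactorizationMonoid α] {a b : α} (hα : ∃ q : α, Prime q)
    (h : ∀ q n, Prime q → q ^ n ∣ a → q ^ n ∣ b) : a ∣ b := by
  induction a using UniqueFactorizationMonoid.induction_on_coprime with
  | h0 =>
    obtain ⟨q, hq⟩ := hα
    rw [zero_dvd_iff]
    by_contra hb
    obtain ⟨n, hn⟩ := FiniteMultiplicity.of_prime_left hq hb
    exact hn (h q (n + 1) hq (dvd_zero _))
  | h1 hu => exact hu.dvd
  | hpr n hq => exact h _ n hq dvd_rfl
  | hcp hxy hx hy =>
    exact hxy.mul_dvd (hx fun q n hq hd => h q n hq (hd.trans (dvd_mul_right _ _)))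
      (hy fun q n hq hd => h q n hq (hd.trans (dvd_mul_left _ _)))

theorem MvPolynomial.derivation_eq_sum_pderiv_mul {R σ : Type*} [CommSemiring R] [Fintype σ]
    (D : Derivation R (MvPolynomial σ R) (MvPolynomial σ R)) (q : MvPolynomial σ R) :
    D q = ∑ i, pderiv i q * D (X i) := by
  classical
  have hsum : ∀ q, (∑ i, D (X i) • pderiv i) q = ∑ i, pderiv i q * D (X i) := fun q => by
    rw [← Derivation.coeFnAddMonoidHom_apply, map_sum, Finset.sum_apply]
    simp [Derivation.coeFnAddMonoidHom_apply, mul_comm]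
  rw [← hsum]
  congr 1
  exact derivation_ext fun j => by simp [hsum, pderiv_X, Pi.single_apply]

theorem LinearMap.apply_eq_sum_mul_single {R ι : Type*} [CommSemiring R] [Fintype ι]
    [DecidableEq ι] (f : (ι → R) →ₗ[R] R) (v : ι → R) :
    f v = ∑ j, v j * f (Pi.single j 1) := by
  conv_lhs => rw [pi_eq_sum_univ' v, map_sum]
  exact Finset.sum_congr rfl fun j _ => by rw [LinearMap.map_smul, smul_eq_mul]

section LinearForms

variable {p m : ℕ}

theorem linForm_eq_sum_smul (v : Fin m → ZMod p) :
    linForm p m v = ∑ j, v j • (X j : MvPolynomial (Fin m) (ZMod p)) := by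
  simp only [linForm, C_mul']

theorem linForm_smul (a : ZMod p) (v : Fin m → ZMod p) :
    linForm p m (a • v) = C a * linForm p m v := by
  simp only [linForm, Pi.smul_apply, smul_eq_mul, C_mul, Finset.mul_sum, mul_assoc]

theorem pderiv_linForm (v : Fin m → ZMod p) (i : Fin m) :
    pderiv i (linForm p m v) = C (v i) := by
  classical
  simp [linForm, pderiv_X, Pi.single_apply]

variable [Fact p.Prime]

theorem linForm_pow_char_pow (v : Fin m → ZMod p) (r : ℕ) :
    linForm p m v ^ p ^ r = ∑ j, C (v j) * (X j : MvPolynomial (Fin m) (ZMod p)) ^ p ^ r := by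
  rw [linForm, sum_pow_char_pow]
  simp only [mul_pow, ← C_pow, ZMod.pow_card_pow]

theorem mul_eq_mul_of_dvd_linForm {ρ : MvPolynomial (Fin m) (ZMod p)} (hρ : ¬IsUnit ρ)
    {c d : Fin m → ZMod p} (hc : ρ ∣ linForm p m c) (hd : ρ ∣ linForm p m d) (i j : Fin m) :
    c i * d j = d i * c j := by
  let π := Ideal.Quotient.mk (Ideal.span {ρ})
  have : Nontrivial (MvPolynomial (Fin m) (ZMod p) ⧸ Ideal.span {ρ}) :=
    Ideal.Quotient.nontrivial_iff.mpr (by rwa [Ne, Ideal.span_singleton_eq_top])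
  have hπρ : π ρ = 0 := Ideal.Quotient.eq_zero_iff_mem.mpr (Ideal.mem_span_singleton_self ρ)
  -- Differentiating `ℓ(c) = ρ q` shows that `c ≡ q ∇ρ` modulo `ρ`.
  have hgrad : ∀ {c : Fin m → ZMod p} {q}, linForm p m c = ρ * q →
      ∀ i, π (C (c i)) = π (pderiv i ρ) * π q := fun hq i => by
    rw [← pderiv_linForm, hq, pderiv_mul, map_add, map_mul, map_mul, hπρ, zero_mul, add_zero]
  obtain ⟨q, hq⟩ := hc
  obtain ⟨q', hq'⟩ := hd
  apply (π.comp C).injective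
  simp only [RingHom.comp_apply, map_mul, hgrad hq, hgrad hq']
  ring

theorem exists_linForm_dvd_iff {ρ : MvPolynomial (Fin m) (ZMod p)} (hρ : ¬IsUnit ρ) :
    ∃ c₀ : Fin m → ZMod p, ∀ c, ρ ∣ linForm p m c ↔ ∃ a : ZMod p, c = a • c₀ := by
  by_cases h : ∃ c₀ : Fin m → ZMod p, c₀ ≠ 0 ∧ ρ ∣ linForm p m c₀
  · obtain ⟨c₀, hc₀, hdvd⟩ := h
    obtain ⟨i, hi⟩ : ∃ i, c₀ i ≠ 0 := Function.ne_iff.mp hc₀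
    refine ⟨c₀, fun c => ⟨fun hc => ⟨c i / c₀ i, funext fun j => ?_⟩, ?_⟩⟩
    · have := mul_eq_mul_of_dvd_linForm hρ hc hdvd i j
      rw [Pi.smul_apply, smul_eq_mul, div_mul_eq_mul_div, eq_div_iff hi]
      linear_combination -this
    · rintro ⟨a, rfl⟩
      rw [linForm_smul]
      exact dvd_mul_of_dvd_right hdvd _
  · push Not at h
    refine ⟨0, fun c => ⟨fun hc => ⟨0, ?_⟩, ?_⟩⟩
    · by_contra hne
      exact h c (by simpa using hne) hc
    · rintro ⟨a, rfl⟩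
      simp [linForm]

end LinearForms

section PrimePowers

variable {p m : ℕ} [Fact p.Prime] {ρ : MvPolynomial (Fin m) (ZMod p)}

theorem dvd_of_forall_dvd_sum_mul_X_pow (hρ : Prime ρ)
    (h : Fin m → MvPolynomial (Fin m) (ZMod p)) (R : ℕ)
    (hrel : ∀ c : Fin m → ZMod p, (∀ j, ρ ∣ h j → c j = 0) → ρ ∣ linForm p m c → c = 0)
    (hh : ∀ r ≥ R, ρ ∣ ∑ j, h j * X j ^ p ^ r) (j : Fin m) : ρ ∣ h j := by
  let I := Ideal.span {ρ}
  have : I.IsPrime := (Ideal.span_singleton_prime hρ.ne_zero).mpr hρ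
  let φ : MvPolynomial (Fin m) (ZMod p) →ₐ[ZMod p]
      FractionRing (MvPolynomial (Fin m) (ZMod p) ⧸ I) :=
    (IsScalarTower.toAlgHom (ZMod p) _ _).comp (Ideal.Quotient.mkₐ (ZMod p) I)
  have hφ : ∀ b, φ b = 0 ↔ ρ ∣ b := fun b => by
    simp [φ, Ideal.Quotient.eq_zero_iff_mem, I, Ideal.mem_span_singleton]
  have hu := eq_zero_of_forall_sum_mul_pow_char_pow_eq_zero (fun j => φ (X j)) (fun j => φ (h j)) R
    (fun c hc hsum => hrel c (fun j hj => hc j ((hφ _).mpr hj))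
      ((hφ _).mp (by simpa [linForm_eq_sum_smul, map_sum] using hsum)))
    (fun r hr => by simpa [map_sum] using (hφ _).mpr (hh r hr))
  exact (hφ _).mp (congrFun hu j)


variable {c₀ : Fin m → ZMod p}

theorem exists_dvd_sub_mul_C_of_dvd_sum (hρ : Prime ρ)
    (hc₀ : ∀ c, ρ ∣ linForm p m c ↔ ∃ a : ZMod p, c = a • c₀)
    (h : Fin m → MvPolynomial (Fin m) (ZMod p)) (R : ℕ)
    (hh : ∀ r ≥ R, ρ ∣ ∑ j, h j * X j ^ p ^ r) :
    ∃ μ, ∀ j, ρ ∣ h j - μ * C (c₀ j) := by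
  by_cases hc : c₀ = 0
  · refine ⟨0, fun j => ?_⟩
    rw [zero_mul, sub_zero]
    refine dvd_of_forall_dvd_sum_mul_X_pow hρ h R (fun c _ hdvd => ?_) hh j
    obtain ⟨a, rfl⟩ := (hc₀ c).mp hdvd
    rw [hc, smul_zero]
  obtain ⟨j₀, hj₀⟩ : ∃ j₀, c₀ j₀ ≠ 0 := Function.ne_iff.mp hc
  -- Subtracting a multiple of `c₀` kills the `j₀`-th coordinate, which rules out every relation.
  refine ⟨h j₀ * C (c₀ j₀)⁻¹, dvd_of_forall_dvd_sum_mul_X_pow hρ _ R (fun c hc' hdvd => ?_)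
    (fun r hr => ?_)⟩
  · obtain ⟨a, rfl⟩ := (hc₀ c).mp hdvd
    have : a * c₀ j₀ = 0 := hc' j₀ (by simp [mul_assoc, ← C_mul, inv_mul_cancel₀ hj₀])
    rw [(mul_eq_zero.mp this).resolve_right hj₀, zero_smul]
  · have hsum : ∑ j, (h j - h j₀ * C (c₀ j₀)⁻¹ * C (c₀ j)) * X j ^ p ^ r =
        ∑ j, h j * X j ^ p ^ r - h j₀ * C (c₀ j₀)⁻¹ * linForm p m c₀ ^ p ^ r := by
      simp only [linForm_pow_char_pow, sub_mul, Finset.sum_sub_distrib, Finset.mul_sum, mul_assoc]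
    rw [hsum]
    have hℓ : ρ ∣ linForm p m c₀ ^ p ^ r :=
      dvd_pow ((hc₀ c₀).mpr ⟨1, (one_smul _ _).symm⟩) (pow_ne_zero r (Fact.out : p.Prime).ne_zero)
    exact dvd_sub (hh r hr) (dvd_mul_of_dvd_right hℓ _)

theorem exists_pow_dvd_sub_mul_C_of_pow_dvd_sum (hρ : Prime ρ)
    (hc₀ : ∀ c, ρ ∣ linForm p m c ↔ ∃ a : ZMod p, c = a • c₀) (A : ℕ)
    (g : Fin m → MvPolynomial (Fin m) (ZMod p)) (R : ℕ)
    (hg : ∀ r ≥ R, ρ ^ A ∣ ∑ j, g j * X j ^ p ^ r) :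
    ∃ ν, ∀ j, ρ ^ A ∣ g j - ν * C (c₀ j) := by
  induction A with
  | zero => exact ⟨0, fun j => one_dvd _⟩
  | succ A ih =>
    obtain ⟨ν, hν⟩ := ih fun r hr => (pow_dvd_pow ρ A.le_succ).trans (hg r hr)
    choose h hh using hν
    -- `ρ ^ (A + 1)` divides `ℓ(c₀) ^ p ^ r` once `p ^ r ≥ A + 1`.
    have hdvd : ∀ r ≥ max R (A + 1), ρ ∣ ∑ j, h j * X j ^ p ^ r := by
      intro r hr
      have hsum : ∑ j, g j * X j ^ p ^ r =
          ν * linForm p m c₀ ^ p ^ r + ρ ^ A * ∑ j, h j * X j ^ p ^ r := by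
        simp only [linForm_pow_char_pow, Finset.mul_sum, ← Finset.sum_add_distrib]
        exact Finset.sum_congr rfl fun j _ => by linear_combination (X j ^ p ^ r) * hh j
      have hA : A + 1 ≤ p ^ r :=
        ((le_max_right R _).trans hr).trans (Nat.lt_pow_self (Fact.out : p.Prime).one_lt).le
      have hℓ : ρ ^ (A + 1) ∣ linForm p m c₀ ^ p ^ r :=
        (pow_dvd_pow ρ hA).trans (pow_dvd_pow_of_dvd ((hc₀ c₀).mpr ⟨1, (one_smul _ _).symm⟩) _)
      have := hg r ((le_max_left R _).trans hr)
      rw [hsum, dvd_add_right (dvd_mul_of_dvd_right hℓ _), pow_succ] at this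
      exact (mul_dvd_mul_iff_left (pow_ne_zero A hρ.ne_zero)).mp this
    obtain ⟨μ, hμ⟩ := exists_dvd_sub_mul_C_of_dvd_sum hρ hc₀ h _ hdvd
    refine ⟨ν + ρ ^ A * μ, fun j => ?_⟩
    have : g j - (ν + ρ ^ A * μ) * C (c₀ j) = ρ ^ A * (h j - μ * C (c₀ j)) := by
      linear_combination hh j
    rw [this, pow_succ]
    exact mul_dvd_mul_left _ (hμ j)

end PrimePowers

section Derivations

variable {p m : ℕ}

/-- The coordinates of `(id ⊗ φ) (∇Y) ∈ B ⊗ V`, where `∇Y = ∑ᵢ ∂ᵢY ⊗ eᵢ`. -/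
noncomputable def mapGradient (φ : (Fin m → ZMod p) →ₗ[ZMod p] (Fin m → ZMod p))
    (Y : MvPolynomial (Fin m) (ZMod p)) (j : Fin m) : MvPolynomial (Fin m) (ZMod p) :=
  ∑ i, pderiv i Y * C (φ (Pi.single i 1) j)

theorem constDer_apply (f : (Fin m → ZMod p) →ₗ[ZMod p] ZMod p)
    (Y : MvPolynomial (Fin m) (ZMod p)) :
    constDer p m f Y = ∑ i, pderiv i Y * C (f (Pi.single i 1)) := by
  rw [derivation_eq_sum_pderiv_mul]
  simp only [constDer, mkDerivation_X]

theorem constDer_comp_apply (g : (Fin m → ZMod p) →ₗ[ZMod p] ZMod p)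
    (φ : (Fin m → ZMod p) →ₗ[ZMod p] (Fin m → ZMod p)) (Y : MvPolynomial (Fin m) (ZMod p)) :
    constDer p m (g ∘ₗ φ) Y = ∑ j, C (g (Pi.single j 1)) * mapGradient φ Y j := by
  simp only [constDer_apply, LinearMap.comp_apply, mapGradient, Finset.mul_sum]
  rw [Finset.sum_comm]
  refine Finset.sum_congr rfl fun i _ => ?_
  rw [LinearMap.apply_eq_sum_mul_single g, map_sum, Finset.mul_sum]
  exact Finset.sum_congr rfl fun j _ => by rw [C_mul]; ring

theorem constDer_neg (f : (Fin m → ZMod p) →ₗ[ZMod p] ZMod p) :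
    constDer p m (-f) = -constDer p m f :=
  derivation_ext fun i => by simp [constDer]

theorem constDer_zero : constDer p m 0 = 0 :=
  derivation_ext fun i => by simp [constDer]

variable [Fact p.Prime]

theorem frobDer_apply (φ : (Fin m → ZMod p) →ₗ[ZMod p] (Fin m → ZMod p)) (r : ℕ)
    (Y : MvPolynomial (Fin m) (ZMod p)) :
    frobDer p m φ r Y = ∑ j, mapGradient φ Y j * X j ^ p ^ r := by
  rw [derivation_eq_sum_pderiv_mul]
  simp only [frobDer, mkDerivation_X, linForm_pow_char_pow, mapGradient, Finset.mul_sum,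
    Finset.sum_mul, mul_assoc]
  exact Finset.sum_comm

end Derivations

section LieAlgebra

variable {p m : ℕ}
  {br : (Fin m → ZMod p) →ₗ[ZMod p] (Fin m → ZMod p) →ₗ[ZMod p] (Fin m → ZMod p)}
  {Φ : (Fin m → ZMod p) →ₗ[ZMod p] (Fin m → ZMod p) →ₗ[ZMod p] ZMod p}
  {Y : MvPolynomial (Fin m) (ZMod p)}

theorem constDer_comp_br_eq_neg (hinv : ∀ x y z, Φ (br x y) z = -Φ y (br x z))
    (x y : Fin m → ZMod p) :
    constDer p m (Φ y ∘ₗ br x) Y = -constDer p m (Φ (br x y)) Y := by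
  have : Φ y ∘ₗ br x = -Φ (br x y) := LinearMap.ext fun z => by simp [hinv]
  rw [this, constDer_neg, Derivation.neg_apply]

variable [Fact p.Prime]

theorem constDer_comp_br_eq_zero {S : Type*} [CommRing S]
    (π : MvPolynomial (Fin m) (ZMod p) →+* S) (halt : br.IsAlt)
    (hinv : ∀ x y z, Φ (br x y) z = -Φ y (br x z)) (c₀ : Fin m → ZMod p)
    (hG : ∀ z, ∃ ν : S, ∀ j, π (mapGradient (br z) Y j) = ν * π (C (c₀ j)))
    (x y : Fin m → ZMod p) :
    π (constDer p m (Φ y ∘ₗ br x) Y) = 0 := by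
  choose ν hν using hG
  have hD : ∀ x y, π (constDer p m (Φ y ∘ₗ br x) Y) = ν x * π (C (Φ y c₀)) := fun x y => by
    rw [constDer_comp_apply, LinearMap.apply_eq_sum_mul_single (Φ y) c₀]
    simp only [map_sum, Finset.mul_sum]
    exact Finset.sum_congr rfl fun j _ => by rw [map_mul, hν, C_mul, map_mul]; ring
  have hself : ∀ x, constDer p m (Φ x ∘ₗ br x) Y = 0 := fun x => by
    rw [constDer_comp_br_eq_neg hinv, halt x, map_zero, constDer_zero, Derivation.zero_apply,
      neg_zero]
  have hswap : constDer p m (Φ y ∘ₗ br x) Y = -constDer p m (Φ x ∘ₗ br y) Y := by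
    rw [constDer_comp_br_eq_neg hinv, constDer_comp_br_eq_neg hinv, ← halt.neg, map_neg,
      constDer_neg, Derivation.neg_apply]
  by_cases hy : Φ y c₀ = 0
  · rw [hD, hy, C_0, map_zero, mul_zero]
  -- Otherwise `D_{⟨y, [y, ·]⟩} Y = 0` forces `ν y = 0`, and skew-symmetry finishes.
  have hν : ν y = 0 := by
    have hunit : IsUnit (π (C (Φ y c₀))) := ((isUnit_iff_ne_zero.mpr hy).map C).map π
    rw [← hunit.mul_left_eq_zero, ← hD, hself, map_zero]
  rw [hswap, map_neg, hD, hν, zero_mul, neg_zero]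

theorem pow_dvd_constDer_comp_br (halt : br.IsAlt) (hinv : ∀ x y z, Φ (br x y) z = -Φ y (br x z))
    {ρ : MvPolynomial (Fin m) (ZMod p)} (hρ : Prime ρ) (A s : ℕ)
    (h : ∀ z r, s ≤ r → ρ ^ A ∣ frobDer p m (br z) r Y) (x y : Fin m → ZMod p) :
    ρ ^ A ∣ constDer p m (Φ y ∘ₗ br x) Y := by
  obtain ⟨c₀, hc₀⟩ := exists_linForm_dvd_iff hρ.not_isUnit
  let π := Ideal.Quotient.mk (Ideal.span {ρ ^ A})
  have hπ : ∀ b, π b = 0 ↔ ρ ^ A ∣ b := fun b => by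
    rw [Ideal.Quotient.eq_zero_iff_mem, Ideal.mem_span_singleton]
  refine (hπ _).mp (constDer_comp_br_eq_zero π halt hinv c₀ (fun z => ?_) x y)
  obtain ⟨ν, hν⟩ := exists_pow_dvd_sub_mul_C_of_pow_dvd_sum hρ hc₀ A (mapGradient (br z) Y) s
    fun r hr => frobDer_apply (br z) r Y ▸ h z r hr
  exact ⟨π ν, fun j => by rw [← map_mul, ← sub_eq_zero, ← map_sub, hπ]; exact hν j⟩

end LieAlgebra

theorem stmt9_general (p m : ℕ) [Fact p.Prime] (hm : 1 ≤ m)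
    (br : (Fin m → ZMod p) →ₗ[ZMod p] (Fin m → ZMod p) →ₗ[ZMod p] (Fin m → ZMod p))
    (halt : ∀ x, br x x = 0)
    (Φ : (Fin m → ZMod p) →ₗ[ZMod p] (Fin m → ZMod p) →ₗ[ZMod p] ZMod p)
    (hinv : ∀ x y z, Φ (br x y) z = -Φ y (br x z))
    (X Y : MvPolynomial (Fin m) (ZMod p)) (s : ℕ)
    (h : ∀ x : Fin m → ZMod p, ∀ r, s ≤ r → frobDer p m (br x) r Y ∈ Ideal.span {X}) :
    ∀ x y : Fin m → ZMod p, constDer p m ((Φ y) ∘ₗ (br x)) Y ∈ Ideal.span {X} := by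
  intro x y
  rw [Ideal.mem_span_singleton]
  refine dvd_of_forall_prime_pow_dvd ⟨_, X_prime (i := (⟨0, hm⟩ : Fin m))⟩ fun ρ A hρ hρX => ?_
  exact pow_dvd_constDer_comp_br halt hinv hρ A s
    (fun z r hr => hρX.trans (Ideal.mem_span_singleton.mp (h z r hr))) x y

/-- suppose `V = 𝔽_p^m` carries a Lie bracket `br` and an invariant
bilinear form `Φ`. If `(ad x)^{[p^r]}(Y) ∈ X·B` for all `x ∈ V` and all `r ≥ s`,
then `D_f(Y) ∈ X·B` for all `x, y ∈ V`, where `f(v) = ⟨y, ⁅x,v⁆⟩`. -/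
theorem stmt9 (p m : ℕ) [Fact p.Prime] (hm : 1 ≤ m)
    (br : (Fin m → ZMod p) →ₗ[ZMod p] (Fin m → ZMod p) →ₗ[ZMod p] (Fin m → ZMod p))
    (halt : ∀ x, br x x = 0)
    (hjac : ∀ x y z, br x (br y z) = br (br x y) z + br y (br x z))
    (Φ : (Fin m → ZMod p) →ₗ[ZMod p] (Fin m → ZMod p) →ₗ[ZMod p] ZMod p)
    (hinv : ∀ x y z, Φ (br x y) z = -Φ y (br x z))
    (X Y : MvPolynomial (Fin m) (ZMod p)) (s : ℕ)
    (h : ∀ x : Fin m → ZMod p, ∀ r, s ≤ r → frobDer p m (br x) r Y ∈ Ideal.span {X}) :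
    ∀ x y : Fin m → ZMod p, constDer p m ((Φ y) ∘ₗ (br x)) Y ∈ Ideal.span {X} :=
  stmt9_general p m hm br halt Φ hinv X Y s h
end

section
/- Let L be a powerful ℤ_p-Lie algebra, let x ∈ N with x ∉ p·N, and let k ≥ ε be such that u := p^k·x ∈ L'. Then: (a) ⁅u, w⁆ ∈ p^k·L' for all w ∈ L'; (b) there exists w ∈ L' with ⁅u, w⁆ ∉ p^{k+1}·L'; and (c) ⁅u, p·w⁆ ∈ p^{k+1}·L' for all w ∈ L'. -/
open scoped TensorProduct

/-- Lemma 3.1 of the paper. `L` is a powerful `ℤ_p`-Lie algebra,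
`N` the normalizer of (the image `L'` of) `L` inside `ℚ_p ⊗ L`, `x ∈ N ∖ pN` and
`k ≥ ε` with `u = p^k x ∈ L'`. Then (a) `[u, L'] ⊆ p^k L'`,
(b) `[u, L'] ⊄ p^{k+1} L'`, and (c) `[u, pL'] ⊆ p^{k+1} L'`. -/
theorem stmt10 (p : ℕ) [Fact p.Prime]
    (L : Type*) [LieRing L] [LieAlgebra ℤ_[p] L]
    [Module.Free ℤ_[p] L] [Module.Finite ℤ_[p] L]
    (ε : ℕ) (hε : ε = if p = 2 then 2 else 1)
    -- `L` is powerful: `⁅x, y⁆ ∈ p^ε · L` for all `x, y ∈ L`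
    (hpow : ∀ x y : L, ∃ z : L, ⁅x, y⁆ = ((p : ℤ_[p]) ^ ε) • z)
    -- `L'`, the image of `L` in `ℚ_p ⊗ L`, and the normalizer `N` of `L`
    (L' : Set (ℚ_[p] ⊗[ℤ_[p]] L)) (hL' : L' = Set.range fun a : L => (1 : ℚ_[p]) ⊗ₜ[ℤ_[p]] a)
    (N : Set (ℚ_[p] ⊗[ℤ_[p]] L)) (hN : N = {x | ∀ u ∈ L', ⁅x, u⁆ ∈ L'})
    (x : ℚ_[p] ⊗[ℤ_[p]] L) (hx : x ∈ N)
    (hxp : ¬∃ y ∈ N, x = (p : ℚ_[p]) • y)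
    (k : ℕ) (hk : ε ≤ k)
    (hu : ((p : ℚ_[p]) ^ k) • x ∈ L') :
    (∀ w ∈ L', ∃ z ∈ L', ⁅((p : ℚ_[p]) ^ k) • x, w⁆ = ((p : ℚ_[p]) ^ k) • z) ∧
      (∃ w ∈ L', ¬∃ z ∈ L', ⁅((p : ℚ_[p]) ^ k) • x, w⁆ = ((p : ℚ_[p]) ^ (k + 1)) • z) ∧
      (∀ w ∈ L', ∃ z ∈ L',
        ⁅((p : ℚ_[p]) ^ k) • x, (p : ℚ_[p]) • w⁆ = ((p : ℚ_[p]) ^ (k + 1)) • z) := by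

  subst hN
  have hx' : ∀ u ∈ L', ⁅x, u⁆ ∈ L' := hx
  have hp0 : (p : ℚ_[p]) ≠ 0 := by
    exact_mod_cast (Fact.out : p.Prime).ne_zero
  have hpk : ((p : ℚ_[p]) ^ k) ≠ 0 := pow_ne_zero _ hp0
  refine ⟨?_, ?_, ?_⟩
  · intro w hw
    exact ⟨⁅x, w⁆, hx' w hw, by rw [smul_lie]⟩
  · by_contra h
    push_neg at h
    apply hxp
    refine ⟨(p : ℚ_[p])⁻¹ • x, ?_, ?_⟩
    · intro u hu'
      obtain ⟨z, hz, hz2⟩ := h u hu'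
      have : ⁅x, u⁆ = (p : ℚ_[p]) • z := by
        have h2 : ((p : ℚ_[p]) ^ k) • ⁅x, u⁆ = ((p : ℚ_[p]) ^ k) • ((p : ℚ_[p]) • z) := by
          rw [← smul_lie, hz2, pow_succ, mul_comm, mul_smul]; exact smul_comm _ _ _
        exact smul_right_injective _ hpk h2
      show ⁅(p : ℚ_[p])⁻¹ • x, u⁆ ∈ L'
      rw [smul_lie, this, smul_smul, inv_mul_cancel₀ hp0, one_smul]
      exact hz
    · rw [smul_smul, mul_inv_cancel₀ hp0, one_smul]
  · intro w hw
    refine ⟨⁅x, w⁆, hx' w hw, ?_⟩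
    rw [smul_lie, lie_smul, smul_smul, pow_succ, mul_comm]
end

section
/- Let L be a Lie algebra over ℤ_p, free of finite rank as a ℤ_p-module, and suppose that L/pL has trivial centre, i.e. for every u ∈ L, if ⁅u, w⁆ ∈ p·L for all w ∈ L then u ∈ p·L. Then the normalizer of L in ℚ_p⊗L equals L itself: N = L'. -/
/-!
`ℚ_p ⊗ L` is the localization of `L` at `p`, so every `x` in the normalizer satisfies
`p ^ n • x ∈ L'` for some `n`. If `p ^ (k + 1) • x = 1 ⊗ u` with `x` in the normalizer, then
`⁅u, w⁆ = p ^ (k + 1) • ⁅x, w⁆ ∈ p L` for all `w ∈ L`, so `u ∈ p L` because `L / p L` has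
trivial centre, and hence `p ^ k • x ∈ L'` (as `L` is torsion-free). Descending on `k` gives `x ∈ L'`.
-/

open scoped TensorProduct

namespace PadicInt

variable {p : ℕ} [Fact p.Prime]

section BaseChange

variable {M : Type*} [AddCommGroup M] [Module ℤ_[p] M]

instance isLocalizedModule_mk_one :
    IsLocalizedModule (nonZeroDivisors ℤ_[p]) (TensorProduct.mk ℤ_[p] ℚ_[p] M 1) :=
  (isLocalizedModule_iff_isBaseChange _ ℚ_[p] _).mpr (TensorProduct.isBaseChange _ _ _)

lemma natCast_pow_smul_tensor (n : ℕ) (x : ℚ_[p] ⊗[ℤ_[p]] M) :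
    (p : ℚ_[p]) ^ n • x = (p : ℤ_[p]) ^ n • x := by
  rw [← map_natCast (algebraMap ℤ_[p] ℚ_[p]), ← map_pow, algebraMap_smul]

lemma natCast_pow_smul_one_tmul (n : ℕ) (m : M) :
    (p : ℚ_[p]) ^ n • (1 : ℚ_[p]) ⊗ₜ[ℤ_[p]] m = 1 ⊗ₜ ((p : ℤ_[p]) ^ n • m) := by
  rw [natCast_pow_smul_tensor, TensorProduct.tmul_smul]

lemma exists_natCast_pow_smul_eq_one_tmul (x : ℚ_[p] ⊗[ℤ_[p]] M) :
    ∃ (n : ℕ) (m : M), (p : ℚ_[p]) ^ n • x = 1 ⊗ₜ m := by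
  obtain ⟨⟨m, s, hs⟩, hx⟩ :=
    IsLocalizedModule.surj (nonZeroDivisors ℤ_[p]) (TensorProduct.mk ℤ_[p] ℚ_[p] M 1) x
  have hs0 : s ≠ 0 := nonZeroDivisors.ne_zero hs
  have hx : unitCoeff hs0 • (p : ℤ_[p]) ^ s.valuation • x = 1 ⊗ₜ m := by
    rw [Units.smul_def, ← mul_smul, ← unitCoeff_spec hs0]
    exact hx
  refine ⟨s.valuation, (unitCoeff hs0)⁻¹ • m, ?_⟩
  rw [natCast_pow_smul_tensor, TensorProduct.tmul_smul, ← hx]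
  exact (inv_smul_smul _ _).symm

lemma one_tmul_injective [Module.IsTorsionFree ℤ_[p] M] :
    Function.Injective fun m : M => (1 : ℚ_[p]) ⊗ₜ[ℤ_[p]] m :=
  (IsLocalizedModule.injective_iff_isRegular (nonZeroDivisors ℤ_[p])
    (TensorProduct.mk ℤ_[p] ℚ_[p] M 1)).mpr fun c =>
      Module.IsTorsionFree.isSMulRegular (.of_ne_zero (nonZeroDivisors.coe_ne_zero c))

end BaseChange

section Normalizer

variable {L : Type*} [LieRing L] [LieAlgebra ℤ_[p] L] [Module.IsTorsionFree ℤ_[p] L]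

lemma exists_natCast_pow_smul_eq_one_tmul_of_pow_succ
    (hcentre : ∀ u : L, (∀ w : L, ∃ z : L, ⁅u, w⁆ = (p : ℤ_[p]) • z) →
      ∃ z : L, u = (p : ℤ_[p]) • z)
    {x : ℚ_[p] ⊗[ℤ_[p]] L} (hx : ∀ w : L, ∃ v : L, 1 ⊗ₜ v = ⁅x, (1 : ℚ_[p]) ⊗ₜ[ℤ_[p]] w⁆)
    {k : ℕ} {u : L} (hu : (p : ℚ_[p]) ^ (k + 1) • x = 1 ⊗ₜ u) :
    ∃ z : L, (p : ℚ_[p]) ^ k • x = 1 ⊗ₜ z := by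
  have hu_central : ∀ w : L, ∃ z : L, ⁅u, w⁆ = (p : ℤ_[p]) • z := by
    intro w
    obtain ⟨v, hv⟩ := hx w
    have h : (1 : ℚ_[p]) ⊗ₜ[ℤ_[p]] ⁅u, w⁆ = 1 ⊗ₜ ((p : ℤ_[p]) ^ (k + 1) • v) := by
      rw [← natCast_pow_smul_one_tmul, hv, ← smul_lie, hu,
        LieAlgebra.ExtendScalars.bracket_tmul, mul_one]
    refine ⟨(p : ℤ_[p]) ^ k • v, ?_⟩
    rw [one_tmul_injective h, smul_smul, ← pow_succ']
  obtain ⟨z, rfl⟩ := hcentre u hu_central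
  refine ⟨z, (smul_right_inj (Nat.cast_ne_zero.mpr (NeZero.ne p) : (p : ℚ_[p]) ≠ 0)).mp ?_⟩
  rw [smul_smul, ← pow_succ', hu]
  simpa using (natCast_pow_smul_one_tmul (p := p) 1 z).symm

lemma exists_one_tmul_eq_of_forall_lie_one_tmul
    (hcentre : ∀ u : L, (∀ w : L, ∃ z : L, ⁅u, w⁆ = (p : ℤ_[p]) • z) →
      ∃ z : L, u = (p : ℤ_[p]) • z)
    {x : ℚ_[p] ⊗[ℤ_[p]] L} (hx : ∀ w : L, ∃ v : L, 1 ⊗ₜ v = ⁅x, (1 : ℚ_[p]) ⊗ₜ[ℤ_[p]] w⁆) :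
    ∃ z : L, 1 ⊗ₜ z = x := by
  obtain ⟨n, m, hm⟩ := exists_natCast_pow_smul_eq_one_tmul x
  induction n generalizing m with
  | zero => exact ⟨m, by simpa using hm.symm⟩
  | succ k ih =>
    obtain ⟨z, hz⟩ := exists_natCast_pow_smul_eq_one_tmul_of_pow_succ hcentre hx hm
    exact ih z hz

end Normalizer

end PadicInt

open PadicInt in
theorem stmt11_general (p : ℕ) [Fact p.Prime]
    (L : Type*) [LieRing L] [LieAlgebra ℤ_[p] L]
    [Module.Free ℤ_[p] L]
    -- `L/pL` has trivial centre
    (hcentre : ∀ u : L, (∀ w : L, ∃ z : L, ⁅u, w⁆ = (p : ℤ_[p]) • z) →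
      ∃ z : L, u = (p : ℤ_[p]) • z)
    (L' : Set (ℚ_[p] ⊗[ℤ_[p]] L)) (hL' : L' = Set.range fun a : L => (1 : ℚ_[p]) ⊗ₜ[ℤ_[p]] a) :
    {x : ℚ_[p] ⊗[ℤ_[p]] L | ∀ u ∈ L', ⁅x, u⁆ ∈ L'} = L' := by
  subst hL'
  ext x
  constructor
  · exact fun hx => exists_one_tmul_eq_of_forall_lie_one_tmul hcentre fun w => hx _ ⟨w, rfl⟩
  · rintro ⟨a, rfl⟩ _ ⟨w, rfl⟩
    exact ⟨⁅a, w⁆, by rw [LieAlgebra.ExtendScalars.bracket_tmul, mul_one]⟩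

/-- if `L` is a `ℤ_p`-Lie algebra, free of finite rank as a
`ℤ_p`-module, such that `L/pL` has trivial centre, then the normalizer `N` of `L`
inside `ℚ_p ⊗ L` equals (the image `L'` of) `L` itself. -/
theorem stmt11 (p : ℕ) [Fact p.Prime]
    (L : Type*) [LieRing L] [LieAlgebra ℤ_[p] L]
    [Module.Free ℤ_[p] L] [Module.Finite ℤ_[p] L]
    -- `L/pL` has trivial centre
    (hcentre : ∀ u : L, (∀ w : L, ∃ z : L, ⁅u, w⁆ = (p : ℤ_[p]) • z) →
      ∃ z : L, u = (p : ℤ_[p]) • z)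
    (L' : Set (ℚ_[p] ⊗[ℤ_[p]] L)) (hL' : L' = Set.range fun a : L => (1 : ℚ_[p]) ⊗ₜ[ℤ_[p]] a) :
    {x : ℚ_[p] ⊗[ℤ_[p]] L | ∀ u ∈ L', ⁅x, u⁆ ∈ L'} = L' :=
  stmt11_general p L hcentre L' hL'
end

section
/- Let p ≥ 5 be a prime and n ≥ 1 an integer with p not dividing n+1. Then sl_{n+1}(ZMod p) is a simple Lie algebra over the field ZMod p: it is non-abelian and its only Lie ideals are 0 and the whole algebra. -/
/-!
A nonzero ideal `I` of `sl n K` contains an elementary matrix `E i j` (`i ≠ j`). If some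
`x ∈ I` has an off-diagonal entry `x j i ≠ 0`, then `ad (E i j) ^ 2 x = -2 x j i • E i j`. If
`x ≠ 0` is diagonal, its diagonal is not constant because `x` is traceless and `card n` is
invertible, so `⁅x, E i j⁆ = (x i i - x j j) • E i j` is a nonzero multiple of `E i j` for
suitable `i ≠ j`. Brackets of elementary matrices then produce every `E k l` and every
`E k k - E l l`, and these span `sl n K`.
-/

open Matrix

namespace LieAlgebra.SpecialLinear

section Bracket

variable {R n : Type*} [CommRing R] [Fintype n] [DecidableEq n]

lemma lie_single_single {i j k : n} (hij : i ≠ j) (hjk : j ≠ k) (hik : i ≠ k) (r s : R) :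
    ⁅single i j hij r, single j k hjk s⁆ = single i k hik (r * s) := by
  ext : 1
  simp [Ring.lie_def, hik.symm]

lemma lie_single_single_swap {i j : n} (hij : i ≠ j) (r s : R) :
    ⁅single i j hij r, single j i hij.symm s⁆ = singleSubSingle i j (r * s) := by
  ext : 1
  simp [Ring.lie_def, mul_comm s]

lemma lie_single_lie_single {i j : n} (hij : i ≠ j) (x : sl n R) :
    ⁅single i j hij (1 : R), ⁅single i j hij (1 : R), x⁆⁆ =
      (-2 * x.val j i) • single i j hij (1 : R) := by
  set E := Matrix.single i j (1 : R)
  have hsq : E * E = 0 := single_mul_single_of_ne 1 i j i hij.symm 1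
  have hexpand : E * (E * x - x * E) - (E * x - x * E) * E =
      E * E * x - (E * x * E + E * x * E) + x * (E * E) := by noncomm_ring
  ext : 1
  simp only [LieSubalgebra.coe_bracket, Ring.lie_def, val_single]
  rw [hexpand, hsq, single_mul_mul_single]
  ext a b
  simp only [zero_mul, one_mul, mul_one, zero_sub, neg_add_rev, mul_zero, Matrix.add_apply,
    Matrix.neg_apply, single_apply, Matrix.zero_apply, add_zero, neg_mul, neg_smul,
    NegMemClass.coe_neg, SetLike.val_smul, val_single, smul_single, smul_eq_mul]
  split_ifs <;> ring

lemma lie_single_of_isDiag {x : sl n R} (hx : x.val.IsDiag) {i j : n} (hij : i ≠ j) :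
    ⁅x, single i j hij (1 : R)⁆ = (x.val i i - x.val j j) • single i j hij (1 : R) := by
  ext a b : 2
  simp only [LieSubalgebra.coe_bracket, Ring.lie_def, val_single, Matrix.sub_apply,
    Matrix.mul_apply, single_apply, ite_and, mul_ite, mul_one, mul_zero, Finset.sum_ite_eq,
    Finset.mem_univ, ↓reduceIte, ite_mul, one_mul, zero_mul, Finset.sum_ite_irrel,
    Finset.sum_const_zero, SetLike.val_smul, Matrix.smul_apply, smul_eq_mul]
  obtain rfl | ha := eq_or_ne i a
  · obtain rfl | hb := eq_or_ne j b
    · simp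
    · simp [hb, hx hb]
  · obtain rfl | hb := eq_or_ne j b
    · simp [ha, hx ha.symm]
    · simp [ha, hb]

lemma singleSubSingle_self (i : n) (r : R) : singleSubSingle i i r = 0 := by
  ext : 1
  simp

-- The diagonal part `∑ i, x i i • E i i` is rewritten as `∑ i, x i i • (E i i - E i₀ i₀)`,
-- which is legitimate because the trace of `x` vanishes.
lemma eq_sum_single_singleSubSingle (x : sl n R) (i₀ : n) :
    x = ∑ i, ∑ j, if h : i = j then singleSubSingle i i₀ (x.val i i)
      else single i j h (x.val i j) := by
  have htr : ∑ i, x.val i i = 0 := x.2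
  have hterm : ∀ i j, ((if h : i = j then singleSubSingle i i₀ (x.val i i)
      else single i j h (x.val i j) : sl n R) : Matrix n n R) =
      Matrix.single i j (x.val i j) - if i = j then Matrix.single i₀ i₀ (x.val i i) else 0 := by
    intro i j
    split_ifs with h
    · subst h; simp
    · simp
  have hdiag : ∑ i, Matrix.single i₀ i₀ (x.val i i) = 0 := by
    simpa [htr] using (map_sum (singleAddMonoidHom i₀ i₀) (fun i => x.val i i) Finset.univ).symm
  ext : 1
  simp only [AddSubmonoidClass.coe_finsetSum, hterm, Finset.sum_sub_distrib, Finset.sum_ite_eq,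
    Finset.mem_univ, if_true]
  rw [← matrix_eq_sum_single, hdiag, sub_zero]

end Bracket

section Ideal

variable {K n : Type*} [Field K] [Fintype n] [DecidableEq n] {I : LieIdeal K (sl n K)}

lemma single_mem_of_single_mem_left {i j k : n} (hij : i ≠ j) (hjk : j ≠ k) (hik : i ≠ k)
    (h : single j k hjk (1 : K) ∈ I) : single i k hik (1 : K) ∈ I := by
  simpa [lie_single_single hij hjk hik] using I.lie_mem (x := single i j hij 1) h

lemma single_mem_of_single_mem_right {i j k : n} (hij : i ≠ j) (hjk : j ≠ k) (hik : i ≠ k)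
    (h : single i j hij (1 : K) ∈ I) : single i k hik (1 : K) ∈ I := by
  simpa [lie_single_single hij hjk hik] using lie_mem_left K _ I _ (single j k hjk 1) h

lemma single_mem_of_single_mem_swap (h2 : (2 : K) ≠ 0) {i j : n} (hij : i ≠ j)
    (h : single i j hij (1 : K) ∈ I) : single j i hij.symm (1 : K) ∈ I := by
  have hmem := I.lie_mem (x := single j i hij.symm 1) (I.lie_mem (x := single j i hij.symm 1) h)
  rw [lie_single_lie_single] at hmem
  exact (I.toSubmodule.smul_mem_iff (by simpa using h2)).mp hmem

lemma single_mem_of_single_mem (h2 : (2 : K) ≠ 0) {i j : n} (hij : i ≠ j)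
    (h : single i j hij (1 : K) ∈ I) {k l : n} (hkl : k ≠ l) (r : K) : single k l hkl r ∈ I := by
  have hrow : ∀ l (hil : i ≠ l), single i l hil (1 : K) ∈ I := by
    intro l hil
    obtain rfl | hjl := eq_or_ne j l
    · exact h
    · exact single_mem_of_single_mem_right hij hjl hil h
  have hone : single k l hkl (1 : K) ∈ I := by
    obtain rfl | hki := eq_or_ne k i
    · exact hrow l hkl
    obtain rfl | hil := eq_or_ne i l
    · exact single_mem_of_single_mem_swap h2 hki.symm (hrow k hki.symm)
    · exact single_mem_of_single_mem_left hki hil hkl (hrow l hil)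
  simpa [← map_smul] using I.smul_mem r hone

lemma singleSubSingle_mem (hI : ∀ i j (hij : i ≠ j) (r : K), single i j hij r ∈ I) (i j : n)
    (r : K) : singleSubSingle i j r ∈ I := by
  obtain rfl | hij := eq_or_ne i j
  · simp [singleSubSingle_self]
  · simpa [lie_single_single_swap hij] using I.lie_mem (x := single i j hij r) (hI j i hij.symm 1)

lemma eq_top_of_forall_single_mem [Nonempty n]
    (hI : ∀ i j (hij : i ≠ j) (r : K), single i j hij r ∈ I) : I = ⊤ := by
  obtain ⟨i₀⟩ := ‹Nonempty n›
  refine eq_top_iff.mpr fun x _ => ?_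
  rw [eq_sum_single_singleSubSingle x i₀]
  refine sum_mem fun i _ => sum_mem fun j _ => ?_
  split_ifs with h
  · exact singleSubSingle_mem hI i i₀ _
  · exact hI i j h _

lemma exists_diag_ne_of_isDiag [Nonempty n] (hcard : (Fintype.card n : K) ≠ 0)
    {x : sl n K} (hx0 : x ≠ 0) (hx : x.val.IsDiag) : ∃ i j, x.val i i ≠ x.val j j := by
  by_contra! hconst
  obtain ⟨i₀⟩ := ‹Nonempty n›
  have htr : (Fintype.card n : K) * x.val i₀ i₀ = 0 := by
    have : ∑ i, x.val i i = 0 := x.2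
    simpa [hconst _ i₀] using this
  have hzero := (mul_eq_zero.mp htr).resolve_left hcard
  apply hx0
  ext a b : 2
  obtain rfl | hab := eq_or_ne a b
  · simp [hconst a i₀, hzero]
  · simp [hx hab]

lemma exists_single_mem [Nonempty n] (h2 : (2 : K) ≠ 0) (hcard : (Fintype.card n : K) ≠ 0)
    {x : sl n K} (hxI : x ∈ I) (hx0 : x ≠ 0) :
    ∃ i j, ∃ hij : i ≠ j, single i j hij (1 : K) ∈ I := by
  by_cases hoff : ∃ i j, i ≠ j ∧ x.val j i ≠ 0
  · obtain ⟨i, j, hij, hx⟩ := hoff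
    refine ⟨i, j, hij, (I.toSubmodule.smul_mem_iff (mul_ne_zero (neg_ne_zero.mpr h2) hx)).mp ?_⟩
    rw [← lie_single_lie_single]
    exact I.lie_mem (I.lie_mem hxI)
  · push Not at hoff
    have hdiag : x.val.IsDiag := fun a b hab => hoff b a hab.symm
    obtain ⟨i, j, hx⟩ := exists_diag_ne_of_isDiag hcard hx0 hdiag
    have hij : i ≠ j := by rintro rfl; exact hx rfl
    refine ⟨i, j, hij, (I.toSubmodule.smul_mem_iff (sub_ne_zero.mpr hx)).mp ?_⟩
    rw [← lie_single_of_isDiag hdiag hij]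
    exact lie_mem_left K _ I _ _ hxI

theorem isSimple_sl (h2 : (2 : K) ≠ 0) (hcard : (Fintype.card n : K) ≠ 0)
    (hn : 1 < Fintype.card n) : IsSimple K (sl n K) where
  eq_bot_or_eq_top I := by
    have : Nonempty n := Fintype.card_pos_iff.mp (by omega)
    refine or_iff_not_imp_left.mpr fun hI => ?_
    obtain ⟨x, hxI, hx0⟩ : ∃ x ∈ I, x ≠ 0 := by
      contrapose! hI
      exact (LieSubmodule.eq_bot_iff I).mpr hI
    obtain ⟨i, j, hij, hmem⟩ := exists_single_mem h2 hcard hxI hx0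
    exact eq_top_of_forall_single_mem fun k l hkl r => single_mem_of_single_mem h2 hij hmem hkl r
  non_abelian := sl_non_abelian n K hn

end Ideal

end LieAlgebra.SpecialLinear

/-- for a nice prime `p` for `A_n` (`p ≥ 5` and `p ∤ n+1`),
the special linear Lie algebra `sl_{n+1}(𝔽_p)` is a simple Lie algebra:
it is non-abelian and its only Lie ideals are `0` and the whole algebra. -/
theorem stmt12 (p n : ℕ) [Fact p.Prime] (hp5 : 5 ≤ p) (hn : 1 ≤ n)
    (hpn : ¬ p ∣ (n + 1)) :
    LieAlgebra.IsSimple (ZMod p)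
      (LieAlgebra.SpecialLinear.sl (Fin (n + 1)) (ZMod p)) := by
  have h2 : ((2 : ℕ) : ZMod p) ≠ 0 := by
    rw [Ne, ZMod.natCast_eq_zero_iff]
    exact fun h => absurd (Nat.le_of_dvd two_pos h) (by omega)
  refine LieAlgebra.SpecialLinear.isSimple_sl (by exact_mod_cast h2) ?_ ?_
  · rwa [Fintype.card_fin, Ne, ZMod.natCast_eq_zero_iff]
  · rw [Fintype.card_fin]
    omega
end

section
/- Let p ≥ 5 be a prime and n ≥ 1 an integer with p not dividing n+1. If x is a trace-zero (n+1)×(n+1) matrix over ℚ_p such that, for every trace-zero (n+1)×(n+1) matrix y with all entries in ℤ_p, the matrix ⁅x,y⁆ = xy − yx has all entries in ℤ_p, then all entries of x lie in ℤ_p. (That is, the normalizer of sl_{n+1}(ℤ_p) inside sl_{n+1}(ℚ_p) equals sl_{n+1}(ℤ_p).) -/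
/-!
Commutators with the elementary matrices `E_kl` (`k ≠ l`) lie in `sl_{n+1}(ℤ_p)` and read off the
entries of `x`: the `(i, i)` entry of `⁅x, E_ki⁆` is `x i k`, and the `(k, l)` entry of `⁅x, E_kl⁆`
is `x k k - x l l`. So the off-diagonal entries and the differences of diagonal entries of `x` are
integral. Since `tr x = 0`, summing the differences gives `(n + 1) * x j j = ∑ i, (x j j - x i i)`,
which is integral by the ultrametric inequality; as `p ∤ n + 1`, the factor `n + 1` is a unit of `ℤ_p`.
-/

open Matrix

namespace Matrix

variable {ι R : Type*} [Fintype ι]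

theorem card_mul_diag_eq_sum_sub [CommRing R] {x : Matrix ι ι R} (hx : trace x = 0) (j : ι) :
    (Fintype.card ι : R) * x j j = ∑ i, (x j j - x i i) := by
  have hdiag : ∑ i, x i i = 0 := hx
  rw [Finset.sum_sub_distrib, Finset.sum_const, hdiag, sub_zero, nsmul_eq_mul, Finset.card_univ]

theorem commutator_single_apply_of_ne [DecidableEq ι] [Ring R] (x : Matrix ι ι R) {i k : ι}
    (hik : i ≠ k) : (x * single k i 1 - single k i 1 * x : Matrix ι ι R) i i = x i k := by
  rw [sub_apply, mul_single_apply_same, single_mul_apply_of_ne 1 k i i i hik, mul_one, sub_zero]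

theorem commutator_single_apply_same [DecidableEq ι] [Ring R] (x : Matrix ι ι R) (k l : ι) :
    (x * single k l 1 - single k l 1 * x : Matrix ι ι R) k l = x k k - x l l := by
  rw [sub_apply, mul_single_apply_same, single_mul_apply_same, mul_one, one_mul]

section Ultrametric

variable {K : Type*} [NormedField K] [IsUltrametricDist K] {x : Matrix ι ι K}

theorem norm_diag_le_one_of_trace_eq_zero (hx : trace x = 0)
    (hcard : ‖(Fintype.card ι : K)‖ = 1) (hdiff : ∀ i j, ‖x i i - x j j‖ ≤ 1) (j : ι) :
    ‖x j j‖ ≤ 1 := by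
  have hsum : ‖∑ i, (x j j - x i i)‖ ≤ 1 :=
    IsUltrametricDist.norm_sum_le_of_forall_le_of_nonneg zero_le_one fun i _ ↦ hdiff j i
  rwa [← card_mul_diag_eq_sum_sub hx, norm_mul, hcard, one_mul] at hsum

theorem norm_apply_le_one_of_norm_commutator_single_le_one [DecidableEq ι] (hx : trace x = 0)
    (hcard : ‖(Fintype.card ι : K)‖ = 1)
    (hcomm : ∀ k l, k ≠ l → ∀ i j,
      ‖(x * single k l 1 - single k l 1 * x : Matrix ι ι K) i j‖ ≤ 1) (i j : ι) :
    ‖x i j‖ ≤ 1 := by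
  have hdiff : ∀ k l, ‖x k k - x l l‖ ≤ 1 := by
    intro k l
    rcases eq_or_ne k l with rfl | hkl
    · simp
    · simpa only [commutator_single_apply_same] using hcomm k l hkl k l
  rcases eq_or_ne i j with rfl | hij
  · exact norm_diag_le_one_of_trace_eq_zero hx hcard hdiff i
  · simpa only [commutator_single_apply_of_ne x hij] using hcomm j i hij.symm i i

end Ultrametric

end Matrix

theorem Padic.exists_coe_eq_iff_norm_le_one {p : ℕ} [Fact p.Prime] (v : ℚ_[p]) :
    (∃ a : ℤ_[p], v = a) ↔ ‖v‖ ≤ 1 :=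
  ⟨fun ⟨a, ha⟩ ↦ ha ▸ a.norm_le_one, fun h ↦ ⟨⟨v, h⟩, rfl⟩⟩

theorem stmt13_general (p n : ℕ) [Fact p.Prime]
    (hpn : ¬ p ∣ (n + 1))
    (x : Matrix (Fin (n + 1)) (Fin (n + 1)) ℚ_[p])
    (hx : Matrix.trace x = 0)
    (hnorm : ∀ y : Matrix (Fin (n + 1)) (Fin (n + 1)) ℚ_[p],
      Matrix.trace y = 0 → (∀ i j, ∃ a : ℤ_[p], y i j = (a : ℚ_[p])) →
        ∀ i j, ∃ a : ℤ_[p], (x * y - y * x) i j = (a : ℚ_[p])) :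
    ∀ i j, ∃ a : ℤ_[p], x i j = (a : ℚ_[p]) := by
  simp only [Padic.exists_coe_eq_iff_norm_le_one] at hnorm ⊢
  have hcard : ‖(Fintype.card (Fin (n + 1)) : ℚ_[p])‖ = 1 := by
    rw [Fintype.card_fin, Padic.norm_natCast_eq_one_iff]
    exact (Nat.Prime.coprime_iff_not_dvd Fact.out).2 hpn
  refine norm_apply_le_one_of_norm_commutator_single_le_one hx hcard fun k l hkl ↦
    hnorm _ (trace_single_eq_of_ne k l 1 hkl) fun i j ↦ ?_
  by_cases h : k = i ∧ l = j <;> simp [h]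

/-- for `p ≥ 5` prime with `p ∤ n+1`, the normalizer of
`sl_{n+1}(ℤ_p)` inside `sl_{n+1}(ℚ_p)` equals `sl_{n+1}(ℤ_p)`: if `x` is a
trace-zero matrix over `ℚ_p` such that `xy − yx` has `ℤ_p`-entries for every
trace-zero matrix `y` with `ℤ_p`-entries, then `x` has `ℤ_p`-entries. -/
theorem stmt13 (p n : ℕ) [Fact p.Prime] (hp5 : 5 ≤ p) (hn : 1 ≤ n)
    (hpn : ¬ p ∣ (n + 1))
    (x : Matrix (Fin (n + 1)) (Fin (n + 1)) ℚ_[p])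
    (hx : Matrix.trace x = 0)
    (hnorm : ∀ y : Matrix (Fin (n + 1)) (Fin (n + 1)) ℚ_[p],
      Matrix.trace y = 0 → (∀ i j, ∃ a : ℤ_[p], y i j = (a : ℚ_[p])) →
        ∀ i j, ∃ a : ℤ_[p], (x * y - y * x) i j = (a : ℚ_[p])) :
    ∀ i j, ∃ a : ℤ_[p], x i j = (a : ℚ_[p]) :=
  stmt13_general p n hpn x hx hnorm
end

section
/- Let p be a prime and n ≥ 1 an integer with p dividing n+1. Then in sl_{n+1}(ZMod p): (i) the identity matrix 1 has trace zero, hence lies in sl_{n+1}(ZMod p); (ii) the element z := Σ_{i=1}^{n} i·(E_{i,i} − E_{i+1,i+1}) equals the identity matrix; and (iii) the centre of the Lie algebra sl_{n+1}(ZMod p) is exactly the one-dimensional (ZMod p)-span of the identity matrix. -/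
namespace Matrix

/-- The weights `i + 1` make the sum telescope: every diagonal entry except the last receives
`(k + 1) - k = 1`, and the last one receives `-n = 1 - (n + 1)`. -/
theorem sum_natCast_smul_single_castSucc_sub_single_succ (R : Type*) [Ring R] (n : ℕ) :
    ∑ i : Fin n, (((i : ℕ) + 1 : ℕ) : R) •
        (single i.castSucc i.castSucc (1 : R) - single i.succ i.succ (1 : R)) =
      1 - ((n + 1 : ℕ) : R) • single (Fin.last n) (Fin.last n) (1 : R) := by
  have h_castSucc : ∑ i : Fin n, (((i : ℕ) + 1 : ℕ) : R) • single i.castSucc i.castSucc (1 : R) =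
      ∑ k : Fin (n + 1), (((k : ℕ) + 1 : ℕ) : R) • single k k (1 : R) -
        ((n + 1 : ℕ) : R) • single (Fin.last n) (Fin.last n) (1 : R) := by
    rw [Fin.sum_univ_castSucc, eq_sub_iff_add_eq]
    simp
  have h_succ : ∑ i : Fin n, (((i : ℕ) + 1 : ℕ) : R) • single i.succ i.succ (1 : R) =
      ∑ k : Fin (n + 1), ((k : ℕ) : R) • single k k (1 : R) := by
    rw [Fin.sum_univ_succ]
    simp
  simp only [smul_sub, Finset.sum_sub_distrib, h_castSucc, h_succ]
  rw [sub_right_comm, ← Finset.sum_sub_distrib, ← sum_single_one]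
  congr 1
  refine Finset.sum_congr rfl fun k _ => ?_
  rw [← sub_smul, Nat.cast_succ, add_sub_cancel_left, one_smul]

theorem commute_traceless_iff_mem_span_one {ι R : Type*} [Fintype ι] [DecidableEq ι] [CommRing R]
    (x : Matrix ι ι R) :
    (∀ y : Matrix ι ι R, trace y = 0 → Commute x y) ↔ x ∈ Submodule.span R {1} := by
  constructor
  · intro h
    obtain ⟨c, rfl⟩ := mem_range_scalar_of_commute_single fun i j hij =>
      (h _ (trace_single_eq_of_ne i j 1 hij)).symm
    exact Submodule.mem_span_singleton.mpr ⟨c, (smul_one_eq_diagonal c).trans rfl⟩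
  · rintro hx y -
    obtain ⟨c, rfl⟩ := Submodule.mem_span_singleton.mp hx
    exact (Commute.one_left y).smul_left c

end Matrix

theorem stmt14_general (p n : ℕ) [Fact p.Prime] (hpn : p ∣ (n + 1)) :
    -- (i) the identity matrix lies in `sl_{n+1}(ZMod p)`
    Matrix.trace (1 : Matrix (Fin (n + 1)) (Fin (n + 1)) (ZMod p)) = 0 ∧
    -- (ii) `z = Σ_{i=1}^n i·(E_{i,i} − E_{i+1,i+1})` equals the identity matrix
    (∑ i : Fin n, (((i : ℕ) + 1 : ℕ) : ZMod p) •
        (Matrix.single (Fin.castSucc i) (Fin.castSucc i) (1 : ZMod p) -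
          Matrix.single (Fin.succ i) (Fin.succ i) (1 : ZMod p)) =
      (1 : Matrix (Fin (n + 1)) (Fin (n + 1)) (ZMod p))) ∧
    -- (iii) the centre of `sl_{n+1}(ZMod p)` is the span of the identity matrix,
    -- which is one-dimensional
    (1 : Matrix (Fin (n + 1)) (Fin (n + 1)) (ZMod p)) ≠ 0 ∧
    (∀ x : Matrix (Fin (n + 1)) (Fin (n + 1)) (ZMod p), Matrix.trace x = 0 →
      ((∀ y : Matrix (Fin (n + 1)) (Fin (n + 1)) (ZMod p),
          Matrix.trace y = 0 → x * y - y * x = 0) ↔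
        x ∈ Submodule.span (ZMod p)
          {(1 : Matrix (Fin (n + 1)) (Fin (n + 1)) (ZMod p))})) := by
  have hp : ((n + 1 : ℕ) : ZMod p) = 0 := (ZMod.natCast_eq_zero_iff _ _).mpr hpn
  refine ⟨?_, ?_, one_ne_zero, fun x _ => ?_⟩
  · rw [Matrix.trace_one, Fintype.card_fin, hp]
  · rw [Matrix.sum_natCast_smul_single_castSucc_sub_single_succ, hp, zero_smul, sub_zero]
  · simp_rw [sub_eq_zero]
    exact Matrix.commute_traceless_iff_mem_span_one x

/-- for a prime `p` dividing `n+1`, in `sl_{n+1}(𝔽_p)`: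
(i) the identity matrix has trace zero; (ii) `z = Σ_{i=1}^n i·(E_{i,i} − E_{i+1,i+1})`
equals the identity matrix; (iii) the centre of `sl_{n+1}(𝔽_p)` is exactly the
one-dimensional span of the identity matrix. -/
theorem stmt14 (p n : ℕ) [Fact p.Prime] (hn : 1 ≤ n) (hpn : p ∣ (n + 1)) :
    -- (i) the identity matrix lies in `sl_{n+1}(ZMod p)`
    Matrix.trace (1 : Matrix (Fin (n + 1)) (Fin (n + 1)) (ZMod p)) = 0 ∧
    -- (ii) `z = Σ_{i=1}^n i·(E_{i,i} − E_{i+1,i+1})` equals the identity matrix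
    (∑ i : Fin n, (((i : ℕ) + 1 : ℕ) : ZMod p) •
        (Matrix.single (Fin.castSucc i) (Fin.castSucc i) (1 : ZMod p) -
          Matrix.single (Fin.succ i) (Fin.succ i) (1 : ZMod p)) =
      (1 : Matrix (Fin (n + 1)) (Fin (n + 1)) (ZMod p))) ∧
    -- (iii) the centre of `sl_{n+1}(ZMod p)` is the span of the identity matrix,
    -- which is one-dimensional
    (1 : Matrix (Fin (n + 1)) (Fin (n + 1)) (ZMod p)) ≠ 0 ∧
    (∀ x : Matrix (Fin (n + 1)) (Fin (n + 1)) (ZMod p), Matrix.trace x = 0 →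
      ((∀ y : Matrix (Fin (n + 1)) (Fin (n + 1)) (ZMod p),
          Matrix.trace y = 0 → x * y - y * x = 0) ↔
        x ∈ Submodule.span (ZMod p)
          {(1 : Matrix (Fin (n + 1)) (Fin (n + 1)) (ZMod p))})) :=
  stmt14_general p n hpn
end
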